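/- arXiv:2605.25154 — 6 statements merged into one kernel-verified Lean document; each statement's English description precedes it below -/
import Mathlib

section
/- Suppose Ω = Ω₁ ⊔ Ω₂ with |Ω₁| = |Ω₂| and (4/|Ω|) ∬_{Ω₁×Ω₂} J(x−y) dx dy < min_{x∈Ω̄} ∫_Ω J(x−y) dy. Then β₁ := sup { ⟨L v,v⟩ : v ∈ L²(Ω), ∫_Ω v = 0, ‖v‖₂ = 1 } satisfies β₁ > −min_{x∈Ω̄} ∫_Ω J(x−y) dy. -/
open MeasureTheory

/-- Sufficient condition for the spectral gap: under the geometric condition,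
`β₁ > -min_{x ∈ closure Ω} ∫_Ω J(x-y) dy`. -/
theorem stmt_4 (n : ℕ) (Ω Ω₁ Ω₂ : Set (EuclideanSpace ℝ (Fin n)))
    (hΩo : IsOpen Ω) (hΩb : Bornology.IsBounded Ω) (hΩpos : 0 < volume Ω)
    (h₁ : MeasurableSet Ω₁) (h₂ : MeasurableSet Ω₂)
    (hdisj : Disjoint Ω₁ Ω₂) (hunion : Ω₁ ∪ Ω₂ = Ω)
    (heq : volume Ω₁ = volume Ω₂)
    (J : EuclideanSpace ℝ (Fin n) → ℝ)
    (hJc : Continuous J) (hJnn : ∀ z, 0 ≤ J z) (hJsym : ∀ z, J (-z) = J z)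
    (hJnorm : ∫ z, J z = 1)
    (hgap : (4 / (volume Ω).toReal) * (∫ x in Ω₁, ∫ y in Ω₂, J (x - y))
        < ⨅ x : closure Ω, ∫ y in Ω, J (↑x - y))
    (β₁ : ℝ)
    (hβ₁ : β₁ = sSup {r : ℝ | ∃ v : EuclideanSpace ℝ (Fin n) → ℝ,
        MemLp v 2 (volume.restrict Ω) ∧ (∫ x in Ω, v x = 0) ∧
        (∫ x in Ω, (v x) ^ 2 = 1) ∧
        r = ∫ x in Ω, (∫ y in Ω, J (x - y) * (v y - v x)) * v x}) :
    β₁ > -(⨅ x : closure Ω, ∫ y in Ω, J (↑x - y)) := by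
  classical
  set m : ℝ := ⨅ x : closure Ω, ∫ y in Ω, J (↑x - y) with hm
  have hsub₁ : Ω₁ ⊆ Ω := hunion ▸ Set.subset_union_left
  have hsub₂ : Ω₂ ⊆ Ω := hunion ▸ Set.subset_union_right
  have hΩfin : volume Ω < ⊤ := hΩb.measure_lt_top
  have hT : 0 < (volume Ω).toReal := ENNReal.toReal_pos hΩpos.ne' hΩfin.ne
  set T : ℝ := (volume Ω).toReal with hTdef
  have hJint : Integrable J := by
    by_contra h
    rw [integral_undef h] at hJnorm; norm_num at hJnorm
  set I : ℝ := ∫ x in Ω₁, ∫ y in Ω₂, J (x - y) with hI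
  have hI_nn : 0 ≤ I :=
    integral_nonneg fun x => integral_nonneg fun y => hJnn _
  have hm_pos : 0 < m :=
    lt_of_le_of_lt (mul_nonneg (by positivity) hI_nn) hgap
  by_cases hbdd : BddAbove {r : ℝ | ∃ v : EuclideanSpace ℝ (Fin n) → ℝ,
      MemLp v 2 (volume.restrict Ω) ∧ (∫ x in Ω, v x = 0) ∧
      (∫ x in Ω, (v x) ^ 2 = 1) ∧
      r = ∫ x in Ω, (∫ y in Ω, J (x - y) * (v y - v x)) * v x}
  swap
  · rw [hβ₁, Real.sSup_of_not_bddAbove hbdd]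
    linarith
  -- the test function
  set V : ℝ := Real.sqrt T⁻¹ with hVdef
  have hV2 : V ^ 2 = T⁻¹ := Real.sq_sqrt (by positivity)
  have hVnn : 0 ≤ V := Real.sqrt_nonneg _
  set v : EuclideanSpace ℝ (Fin n) → ℝ := fun x =>
    Set.indicator Ω₁ (fun _ => V) x - Set.indicator Ω₂ (fun _ => V) x with hvdef
  have hv₁ : ∀ x ∈ Ω₁, v x = V := by
    intro x hx
    simp [hvdef, Set.indicator_of_mem hx,
      Set.indicator_of_notMem (Set.disjoint_left.mp hdisj hx)]
  have hv₂ : ∀ x ∈ Ω₂, v x = -V := by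
    intro x hx
    simp [hvdef, Set.indicator_of_mem hx,
      Set.indicator_of_notMem (Set.disjoint_right.mp hdisj hx)]
  have hvm : Measurable v :=
    (measurable_const.indicator h₁).sub (measurable_const.indicator h₂)
  have hvbd : ∀ x, ‖v x‖ ≤ V := by
    intro x
    rw [Real.norm_eq_abs]
    by_cases hx1 : x ∈ Ω₁ <;> by_cases hx2 : x ∈ Ω₂ <;>
      simp [hvdef, Set.indicator_apply, hx1, hx2, abs_of_nonneg hVnn, abs_neg, hVnn]
  haveI hfinΩ : IsFiniteMeasure (volume.restrict Ω) :=
    ⟨by rw [Measure.restrict_apply_univ]; exact hΩfin⟩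
  have hmemLp : MemLp v 2 (volume.restrict Ω) :=
    MemLp.of_bound hvm.aestronglyMeasurable V (Filter.Eventually.of_forall hvbd)
  -- mean zero
  have hμ₁ : volume Ω₁ < ⊤ := lt_of_le_of_lt (measure_mono hsub₁) hΩfin
  have hμ₂ : volume Ω₂ < ⊤ := lt_of_le_of_lt (measure_mono hsub₂) hΩfin
  have hmean : ∫ x in Ω, v x = 0 := by
    have hint1 : Integrable (Set.indicator Ω₁ (fun _ => V)) (volume.restrict Ω) :=
      (integrable_const V).indicator h₁
    have hint2 : Integrable (Set.indicator Ω₂ (fun _ => V)) (volume.restrict Ω) :=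
      (integrable_const V).indicator h₂
    rw [hvdef]
    rw [integral_sub hint1 hint2, setIntegral_indicator h₁, setIntegral_indicator h₂,
      Set.inter_eq_self_of_subset_right hsub₁, Set.inter_eq_self_of_subset_right hsub₂,
      setIntegral_const, setIntegral_const, measureReal_def, measureReal_def, heq, sub_self]
  -- norm one
  have hnorm : ∫ x in Ω, (v x) ^ 2 = 1 := by
    have : ∀ x ∈ Ω, (v x) ^ 2 = V ^ 2 := by
      intro x hx
      rcases (hunion ▸ hx : x ∈ Ω₁ ∪ Ω₂) with h | h
      · rw [hv₁ x h]
      · rw [hv₂ x h, neg_pow]; ring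
    rw [setIntegral_congr_fun hΩo.measurableSet this, setIntegral_const, hV2, smul_eq_mul,
      measureReal_def, ← hTdef, mul_inv_cancel₀ hT.ne']
  -- integrability of translated kernel
  have hJx : ∀ x : EuclideanSpace ℝ (Fin n), Integrable (fun y => J (x - y)) volume := by
    intro x
    have := (Measure.measurePreserving_sub_left volume x).integrable_comp_emb
      (MeasurableEquiv.subLeft x).measurableEmbedding (g := J)
    exact this.mpr hJint
  have htot : ∀ x : EuclideanSpace ℝ (Fin n), (∫ y, J (x - y)) = 1 := fun x => by
    rw [integral_sub_left_eq_self J volume x, hJnorm]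
  have ha_nn : ∀ (S : Set (EuclideanSpace ℝ (Fin n))) (x : EuclideanSpace ℝ (Fin n)), 0 ≤ ∫ y in S, J (x - y) :=
    fun S x => integral_nonneg fun y => hJnn _
  have ha_le : ∀ (S : Set (EuclideanSpace ℝ (Fin n))) (x : EuclideanSpace ℝ (Fin n)), (∫ y in S, J (x - y)) ≤ 1 := by
    intro S x
    rw [← htot x]
    exact setIntegral_le_integral (hJx x) (Filter.Eventually.of_forall fun y => hJnn _)
  have hKm : ∀ S : Set (EuclideanSpace ℝ (Fin n)), StronglyMeasurable (fun x => ∫ y in S, J (x - y)) := by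
    intro S
    have hc : Continuous fun p : (EuclideanSpace ℝ (Fin n)) × (EuclideanSpace ℝ (Fin n)) => J (p.1 - p.2) :=
      hJc.comp (continuous_fst.sub continuous_snd)
    exact hc.stronglyMeasurable.integral_prod_right'
  -- integrability of the averaged kernel on subsets of Ω
  have haint : ∀ S₁ S₂ : Set (EuclideanSpace ℝ (Fin n)), S₁ ⊆ Ω →
      IntegrableOn (fun x => ∫ y in S₂, J (x - y)) S₁ volume := by
    intro S₁ S₂ hS₁
    haveI : IsFiniteMeasure (volume.restrict S₁) :=
      ⟨by rw [Measure.restrict_apply_univ]; exact lt_of_le_of_lt (measure_mono hS₁) hΩfin⟩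
    refine Integrable.mono' (integrable_const 1) (hKm S₂).aestronglyMeasurable
      (Filter.Eventually.of_forall fun x => ?_)
    rw [Real.norm_eq_abs, abs_of_nonneg (ha_nn S₂ x)]
    exact ha_le S₂ x
  -- inner integral formula
  have hinnerint : ∀ (x : EuclideanSpace ℝ (Fin n)) (S : Set (EuclideanSpace ℝ (Fin n))),
      IntegrableOn (fun y => J (x - y) * (v y - v x)) S volume := by
    intro x S
    have hb : Integrable (fun y => (v y - v x) * J (x - y)) (volume.restrict S) :=
      Integrable.bdd_mul (c := V + ‖v x‖) ((hJx x).integrableOn)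
        ((hvm.sub measurable_const).aestronglyMeasurable)
        (Filter.Eventually.of_forall fun y => le_trans (norm_sub_le _ _)
          (add_le_add_left (hvbd y) _))
    exact hb.congr (Filter.Eventually.of_forall fun y => mul_comm _ _)
  have hinner : ∀ x : EuclideanSpace ℝ (Fin n), (∫ y in Ω, J (x - y) * (v y - v x))
      = (∫ y in Ω₁, J (x - y)) * (V - v x) + (∫ y in Ω₂, J (x - y)) * (-V - v x) := by
    intro x
    have hsplit : (∫ y in Ω, J (x - y) * (v y - v x))
        = (∫ y in Ω₁, J (x - y) * (v y - v x)) + ∫ y in Ω₂, J (x - y) * (v y - v x) := by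
      rw [← hunion]
      exact setIntegral_union hdisj h₂ (hinnerint x Ω₁) (hinnerint x Ω₂)
    have e₁ : (∫ y in Ω₁, J (x - y) * (v y - v x))
        = (∫ y in Ω₁, J (x - y)) * (V - v x) := by
      rw [← integral_mul_const]
      exact setIntegral_congr_fun h₁ fun y hy => by rw [hv₁ y hy]
    have e₂ : (∫ y in Ω₂, J (x - y) * (v y - v x))
        = (∫ y in Ω₂, J (x - y)) * (-V - v x) := by
      rw [← integral_mul_const]
      exact setIntegral_congr_fun h₂ fun y hy => by rw [hv₂ y hy]
    rw [hsplit, e₁, e₂]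
  -- the Rayleigh quotient of v
  set F : EuclideanSpace ℝ (Fin n) → ℝ := fun x => (∫ y in Ω, J (x - y) * (v y - v x)) * v x with hFdef
  have hF₁ : ∀ x ∈ Ω₁, F x = (-2 * V ^ 2) * ∫ y in Ω₂, J (x - y) := by
    intro x hx
    rw [hFdef]; simp only
    rw [hinner x, hv₁ x hx]; ring
  have hF₂ : ∀ x ∈ Ω₂, F x = (-2 * V ^ 2) * ∫ y in Ω₁, J (x - y) := by
    intro x hx
    rw [hFdef]; simp only
    rw [hinner x, hv₂ x hx]; ring
  have hFint₁ : IntegrableOn F Ω₁ volume :=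
    IntegrableOn.congr_fun ((haint Ω₁ Ω₂ hsub₁).const_mul (-2 * V ^ 2))
      (fun x hx => (hF₁ x hx).symm) h₁
  have hFint₂ : IntegrableOn F Ω₂ volume :=
    IntegrableOn.congr_fun ((haint Ω₂ Ω₁ hsub₂).const_mul (-2 * V ^ 2))
      (fun x hx => (hF₂ x hx).symm) h₂
  have hFsplit : (∫ x in Ω, F x) = (∫ x in Ω₁, F x) + ∫ x in Ω₂, F x := by
    rw [← hunion]
    exact setIntegral_union hdisj h₂ hFint₁ hFint₂
  have hFv₁ : (∫ x in Ω₁, F x) = (-2 * V ^ 2) * I := by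
    rw [setIntegral_congr_fun h₁ hF₁, integral_const_mul, hI]
  -- Fubini + symmetry for the crossed term
  have hswap : (∫ x in Ω₂, ∫ y in Ω₁, J (x - y)) = I := by
    have hK : IsCompact (closure Ω) := hΩb.isCompact_closure
    have hKsub : IsCompact ((fun p : (EuclideanSpace ℝ (Fin n)) × (EuclideanSpace ℝ (Fin n)) => p.1 - p.2) '' (closure Ω ×ˢ closure Ω)) :=
      (hK.prod hK).image (continuous_fst.sub continuous_snd)
    obtain ⟨C, hC⟩ := hKsub.exists_bound_of_continuousOn hJc.continuousOn
    have hprodint : Integrable (fun p : (EuclideanSpace ℝ (Fin n)) × (EuclideanSpace ℝ (Fin n)) => J (p.1 - p.2))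
        ((volume.restrict Ω₂).prod (volume.restrict Ω₁)) := by
      rw [Measure.prod_restrict]
      haveI : IsFiniteMeasure (((volume : Measure (EuclideanSpace ℝ (Fin n))).prod volume).restrict (Ω₂ ×ˢ Ω₁)) := by
        constructor
        rw [Measure.restrict_apply_univ, Measure.prod_prod]
        exact ENNReal.mul_lt_top hμ₂ hμ₁
      refine Integrable.mono' (integrable_const C)
        ((hJc.comp (continuous_fst.sub continuous_snd)).aestronglyMeasurable)
        (((ae_restrict_iff' (h₂.prod h₁)).2 (Filter.Eventually.of_forall fun p hp => ?_)))
      exact hC _ ⟨(p.1, p.2), ⟨subset_closure (hsub₂ hp.1), subset_closure (hsub₁ hp.2)⟩, rfl⟩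
    have := integral_integral_swap (f := fun x y => J (x - y)) hprodint
    rw [this, hI]
    refine setIntegral_congr_fun h₁ fun a _ => setIntegral_congr_fun h₂ fun b _ => ?_
    rw [← hJsym (a - b), neg_sub]
  have hFv₂ : (∫ x in Ω₂, F x) = (-2 * V ^ 2) * I := by
    rw [setIntegral_congr_fun h₂ hF₂, integral_const_mul, hswap]
  have hr : (∫ x in Ω, F x) = -(4 / T * I) := by
    rw [hFsplit, hFv₁, hFv₂, hV2]
    field_simp
    ring
  -- conclude
  have hmem : (∫ x in Ω, F x) ∈ {r : ℝ | ∃ v : EuclideanSpace ℝ (Fin n) → ℝ,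
      MemLp v 2 (volume.restrict Ω) ∧ (∫ x in Ω, v x = 0) ∧
      (∫ x in Ω, (v x) ^ 2 = 1) ∧
      r = ∫ x in Ω, (∫ y in Ω, J (x - y) * (v y - v x)) * v x} :=
    ⟨v, hmemLp, hmean, hnorm, rfl⟩
  have hle : (∫ x in Ω, F x) ≤ β₁ := hβ₁ ▸ le_csSup hbdd hmem
  have : -(4 / T * I) > -m := neg_lt_neg hgap
  rw [hr] at hle
  linarith
end

section
/- Let J_p(z) = C_p e^{−λ|z|^p} on ℝ with λ > 0 and 0 < p ≤ 1, and Ω = (−L, L), Ω₁ = (−L,0), Ω₂ = (0,L). Then for every L > 0, the strict inequality (2/L) ∬_{Ω₁×Ω₂} J_p(x−y) dx dy < ∫_0^{2L} J_p(z) dz holds, where ∫_0^{2L} J_p(z) dz = min_{x∈[−L,L]} ∫_{−L}^L J_p(x−y) dy. -/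
open MeasureTheory Real

private lemma strictConvex_aux {p lam C : ℝ} (hp : 0 < p) (hp1 : p ≤ 1) (hlam : 0 < lam)
    (hC : 0 < C) :
    StrictConvexOn ℝ (Set.Ioi (0:ℝ)) (fun z : ℝ => C * Real.exp (-lam * z ^ p)) := by
  have hcont : ContinuousOn (fun z : ℝ => C * Real.exp (-lam * z ^ p)) (Set.Ioi 0) :=
    (continuous_const.mul (Real.continuous_exp.comp
      (continuous_const.mul (Real.continuous_rpow_const hp.le)))).continuousOn
  apply strictConvexOn_of_deriv2_pos (convex_Ioi 0) hcont
  intro x hx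
  rw [interior_Ioi] at hx
  have hd1 : ∀ y : ℝ, 0 < y → HasDerivAt (fun z : ℝ => C * Real.exp (-lam * z ^ p))
      (C * Real.exp (-lam * y ^ p) * (-lam * (p * y ^ (p - 1)))) y := by
    intro y hy
    have h0 : HasDerivAt (fun z : ℝ => -lam * z ^ p) (-lam * (p * y ^ (p - 1))) y :=
      (Real.hasDerivAt_rpow_const (Or.inl hy.ne')).const_mul (-lam)
    have h1 := h0.exp.const_mul C
    rw [mul_assoc]
    exact h1
  have hD1 : Set.EqOn (deriv (fun z : ℝ => C * Real.exp (-lam * z ^ p)))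
      (fun y : ℝ => C * Real.exp (-lam * y ^ p) * (-lam * (p * y ^ (p - 1)))) (Set.Ioi 0) :=
    fun y hy => (hd1 y hy).deriv
  have heq : deriv (fun z : ℝ => C * Real.exp (-lam * z ^ p)) =ᶠ[nhds x]
      (fun y : ℝ => C * Real.exp (-lam * y ^ p) * (-lam * (p * y ^ (p - 1)))) :=
    Filter.eventuallyEq_of_mem (isOpen_Ioi.mem_nhds hx) hD1
  have h0 : HasDerivAt (fun z : ℝ => -lam * (p * z ^ (p - 1)))
      (-lam * (p * ((p - 1) * x ^ (p - 2)))) x := by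
    have h := ((Real.hasDerivAt_rpow_const (p := p - 1) (x := x)
      (Or.inl hx.ne')).const_mul p).const_mul (-lam)
    rw [show p - 1 - 1 = p - 2 by ring] at h
    exact h
  have hd2 : HasDerivAt (fun y : ℝ => C * Real.exp (-lam * y ^ p) * (-lam * (p * y ^ (p - 1))))
      ((C * Real.exp (-lam * x ^ p) * (-lam * (p * x ^ (p - 1)))) * (-lam * (p * x ^ (p - 1)))
        + (C * Real.exp (-lam * x ^ p)) * (-lam * (p * ((p - 1) * x ^ (p - 2))))) x :=
    (hd1 x hx).mul h0
  have hit : deriv^[2] (fun z : ℝ => C * Real.exp (-lam * z ^ p)) x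
      = deriv (deriv (fun z : ℝ => C * Real.exp (-lam * z ^ p))) x := rfl
  rw [hit, heq.deriv_eq, hd2.deriv]
  have hx1 : (0:ℝ) < x ^ (p - 1) := Real.rpow_pos_of_pos hx _
  have hx2 : (0:ℝ) < x ^ (p - 2) := Real.rpow_pos_of_pos hx _
  have hE : (0:ℝ) < C * Real.exp (-lam * x ^ p) := mul_pos hC (Real.exp_pos _)
  have key : (C * Real.exp (-lam * x ^ p) * (-lam * (p * x ^ (p - 1)))) * (-lam * (p * x ^ (p - 1)))
        + (C * Real.exp (-lam * x ^ p)) * (-lam * (p * ((p - 1) * x ^ (p - 2))))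
      = (C * Real.exp (-lam * x ^ p)) * ((lam * (p * x ^ (p - 1))) * (lam * (p * x ^ (p - 1))))
        + (C * Real.exp (-lam * x ^ p)) * (lam * (p * ((1 - p) * x ^ (p - 2)))) := by ring
  rw [key]
  have h1 : (0:ℝ) < (C * Real.exp (-lam * x ^ p))
      * ((lam * (p * x ^ (p - 1))) * (lam * (p * x ^ (p - 1)))) :=
    mul_pos hE (mul_pos (mul_pos hlam (mul_pos hp hx1)) (mul_pos hlam (mul_pos hp hx1)))
  have h2 : (0:ℝ) ≤ (C * Real.exp (-lam * x ^ p)) * (lam * (p * ((1 - p) * x ^ (p - 2)))) :=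
    mul_nonneg hE.le (mul_nonneg hlam.le (mul_nonneg hp.le
      (mul_nonneg (by linarith) hx2.le)))
  linarith

private lemma four_point {ψ : ℝ → ℝ} (h : StrictConvexOn ℝ (Set.Ioi (0:ℝ)) ψ)
    {a b c d : ℝ} (ha : 0 < a) (hab : a < b) (hbc : b ≤ c) (hcd : c < d)
    (hsum : a + d = b + c) : ψ b + ψ c < ψ a + ψ d := by
  have had : a < d := by linarith
  have hda : 0 < d - a := by linarith
  have ha' : a ∈ Set.Ioi (0:ℝ) := ha
  have hd' : d ∈ Set.Ioi (0:ℝ) := by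
    simp only [Set.mem_Ioi]; linarith
  set t : ℝ := (d - b) / (d - a) with ht
  have key : t * (d - a) = d - b := div_mul_cancel₀ _ hda.ne'
  have ht0 : 0 < t := div_pos (by linarith) hda
  have ht1 : t < 1 := (div_lt_one hda).2 (by linarith)
  have hb' : t * a + (1 - t) * d = b := by linear_combination (-1 : ℝ) * key
  have hc' : (1 - t) * a + t * d = c := by linear_combination key + hsum
  have h1 := h.2 ha' hd' had.ne ht0 (by linarith : (0:ℝ) < 1 - t) (by ring)
  have h2 := h.2 ha' hd' had.ne (by linarith : (0:ℝ) < 1 - t) ht0 (by ring)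
  simp only [smul_eq_mul] at h1 h2
  rw [hb'] at h1
  rw [hc'] at h2
  linarith

/-- For the generalized exponential kernel with `0 < p ≤ 1`, the spectral gap
condition holds on `Ω = (-L, L)` for every `L > 0` and `λ > 0`;
moreover the right-hand side equals the minimal retained mass. -/
theorem stmt_5 (p lam L C : ℝ) (hp : 0 < p) (hp1 : p ≤ 1) (hlam : 0 < lam)
    (hL : 0 < L) (hC : 0 < C)
    (J : ℝ → ℝ) (hJ : J = fun z => C * Real.exp (-lam * |z| ^ p))
    (hnorm : ∫ z, J z = 1) :
    (2 / L) * (∫ x in Set.Ioo (-L) (0:ℝ), ∫ y in Set.Ioo (0:ℝ) L, J (x - y))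
      < (∫ z in Set.Ioo (0:ℝ) (2*L), J z) ∧
    (∫ z in Set.Ioo (0:ℝ) (2*L), J z)
      = ⨅ x : Set.Icc (-L) L, ∫ y in Set.Ioo (-L) L, J (↑x - y) := by
  -- basic properties of J
  have hJcont : Continuous J := by
    rw [hJ]
    exact continuous_const.mul (Real.continuous_exp.comp
      (continuous_const.mul ((Real.continuous_rpow_const hp.le).comp continuous_abs)))
  have hJeven : ∀ z : ℝ, J (-z) = J z := by
    intro z; simp [hJ]
  have hJanti : ∀ a b : ℝ, 0 ≤ a → a ≤ b → J b ≤ J a := by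
    intro a b ha hab
    rw [hJ]
    simp only
    have h1 : |a| ^ p ≤ |b| ^ p := by
      apply Real.rpow_le_rpow (abs_nonneg a) _ hp.le
      rw [abs_of_nonneg ha, abs_of_nonneg (le_trans ha hab)]
      exact hab
    have h2 : -lam * |b| ^ p ≤ -lam * |a| ^ p := by nlinarith
    exact mul_le_mul_of_nonneg_left (Real.exp_le_exp.2 h2) hC.le
  have hJconv4 : ∀ a b c d : ℝ, 0 < a → a < b → b ≤ c → c < d → a + d = b + c →
      J b + J c < J a + J d := by
    intro a b c d ha hab hbc hcd hsum
    have h4 := four_point (strictConvex_aux hp hp1 hlam hC) ha hab hbc hcd hsum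
    rw [hJ]
    simp only
    rw [abs_of_pos ha, abs_of_pos (by linarith : (0:ℝ) < b),
      abs_of_pos (by linarith : (0:ℝ) < c), abs_of_pos (by linarith : (0:ℝ) < d)]
    exact h4
  have hint : ∀ a b : ℝ, IntervalIntegrable J volume a b :=
    fun a b => hJcont.intervalIntegrable a b
  -- primitive
  set Φ : ℝ → ℝ := fun y => ∫ t in (0:ℝ)..y, J t with hΦdef
  have hΦcont : Continuous Φ := intervalIntegral.continuous_primitive hint 0
  have hΦ0 : Φ 0 = 0 := intervalIntegral.integral_same
  have hsub : ∀ a b : ℝ, (∫ t in a..b, J t) = Φ b - Φ a :=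
    fun a b => (intervalIntegral.integral_interval_sub_left (hint 0 b) (hint 0 a)).symm
  have hΦderiv : ∀ t : ℝ, HasDerivAt Φ (J t) t := fun t =>
    intervalIntegral.integral_hasDerivAt_right (hint 0 t)
      (hJcont.stronglyMeasurable.stronglyMeasurableAtFilter) hJcont.continuousAt
  have heven : ∀ a b : ℝ, (∫ t in a..b, J t) = ∫ t in (-b)..(-a), J t := by
    intro a b
    rw [← intervalIntegral.integral_comp_neg J]
    simp only [hJeven]
  have hΦodd : ∀ y : ℝ, Φ (-y) = -Φ y := by
    intro y
    have h := heven 0 (-y)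
    rw [neg_zero, neg_neg, hsub, hsub, hΦ0] at h
    linarith
  have hIoo : ∀ (a b : ℝ) (g : ℝ → ℝ), a ≤ b →
      (∫ t in Set.Ioo a b, g t) = ∫ t in a..b, g t := by
    intro a b g hab
    rw [intervalIntegral.integral_of_le hab]
    exact (MeasureTheory.integral_Ioc_eq_integral_Ioo).symm
  have hcomp : ∀ (c t : ℝ), HasDerivAt (fun s : ℝ => Φ (c + s)) (J (c + t)) t := by
    intro c t
    have h := (hΦderiv (c + t)).comp t ((hasDerivAt_id t).const_add c)
    simpa [Function.comp_def] using h
  -- key convexity estimate, in terms of the primitive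
  have key1 : ∀ u : ℝ, 0 < u → u < L →
      Φ (2*L - u) - Φ (L - u) + Φ (L + u) - Φ u < Φ (2*L) := by
    intro u hu huL
    set Q : ℝ → ℝ := fun t => Φ t + Φ (2*L - u + t) - Φ (L - u + t) - Φ (L + t) with hQ
    have hq_eq : (∫ t in (0:ℝ)..u,
        (J t + J (2*L - u + t) - J (L - u + t) - J (L + t))) = Q u - Q 0 := by
      apply intervalIntegral.integral_eq_sub_of_hasDerivAt
      · intro t _
        exact (((hΦderiv t).add (hcomp (2*L - u) t)).sub (hcomp (L - u) t)).sub (hcomp L t)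
      · apply Continuous.intervalIntegrable
        exact ((hJcont.add (hJcont.comp (continuous_const.add continuous_id))).sub
          (hJcont.comp (continuous_const.add continuous_id))).sub
          (hJcont.comp (continuous_const.add continuous_id))
    have hqpos : 0 < ∫ t in (0:ℝ)..u,
        (J t + J (2*L - u + t) - J (L - u + t) - J (L + t)) := by
      apply intervalIntegral.intervalIntegral_pos_of_pos_on
      · apply Continuous.intervalIntegrable
        exact ((hJcont.add (hJcont.comp (continuous_const.add continuous_id))).sub
          (hJcont.comp (continuous_const.add continuous_id))).sub
          (hJcont.comp (continuous_const.add continuous_id))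
      · intro t ht
        have h4 := hJconv4 t (L - u + t) (L + t) (2*L - u + t) ht.1 (by linarith)
          (by linarith) (by linarith) (by ring)
        linarith
      · exact hu
    rw [hq_eq] at hqpos
    have hQu : Q u = Φ u + Φ (2*L) - Φ L - Φ (L + u) := by
      rw [hQ]
      simp only
      rw [show 2*L - u + u = 2*L by ring, show L - u + u = L by ring]
    have hQ0 : Q 0 = Φ (2*L - u) - Φ (L - u) - Φ L := by
      rw [hQ]
      simp only
      rw [add_zero, add_zero, add_zero, hΦ0]
      ring
    rw [hQu, hQ0] at hqpos
    linarith
  -- inner integral in terms of the primitive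
  have hinner : ∀ x : ℝ, (∫ y in Set.Ioo (0:ℝ) L, J (x - y)) = Φ x - Φ (x - L) := by
    intro x
    rw [hIoo 0 L (fun y => J (x - y)) hL.le,
      intervalIntegral.integral_comp_sub_left J x, sub_zero, hsub]
  -- pairing estimate
  have hGpair : ∀ x : ℝ, -L < x → x < 0 →
      0 < Φ (2*L) - ((Φ x - Φ (x - L)) + (Φ (-L - x) - Φ (-L - x - L))) := by
    intro x h1 h2
    have k := key1 (x + L) (by linarith) (by linarith)
    have k1 : Φ (2*L - (x + L)) = Φ (L - x) := by rw [show 2*L - (x + L) = L - x by ring]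
    have k2 : Φ (L - (x + L)) = -Φ x := by rw [show L - (x + L) = -x by ring, hΦodd]
    have k3 : Φ (L + (x + L)) = Φ (x + 2*L) := by rw [show L + (x + L) = x + 2*L by ring]
    have o1 : Φ (x - L) = -Φ (L - x) := by rw [show x - L = -(L - x) by ring, hΦodd]
    have o2 : Φ (-L - x) = -Φ (x + L) := by rw [show -L - x = -(x + L) by ring, hΦodd]
    have o3 : Φ (-L - x - L) = -Φ (x + 2*L) := by
      rw [show -L - x - L = -(x + 2*L) by ring, hΦodd]
    rw [k1, k2, k3] at k
    rw [o1, o2, o3]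
    linarith
  -- continuity bits
  have hcontA : Continuous (fun x : ℝ => Φ x - Φ (x - L)) :=
    hΦcont.sub (hΦcont.comp (continuous_id.sub continuous_const))
  have hcontB : Continuous (fun x : ℝ => Φ (-L - x) - Φ (-L - x - L)) :=
    (hΦcont.comp (continuous_const.sub continuous_id)).sub
      (hΦcont.comp ((continuous_const.sub continuous_id).sub continuous_const))
  have intA : IntervalIntegrable (fun x : ℝ => Φ x - Φ (x - L)) volume (-L) 0 :=
    hcontA.intervalIntegrable _ _
  have intB : IntervalIntegrable (fun x : ℝ => Φ (-L - x) - Φ (-L - x - L)) volume (-L) 0 :=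
    hcontB.intervalIntegrable _ _
  have big : 0 < ∫ x in (-L)..(0:ℝ),
      (Φ (2*L) - ((Φ x - Φ (x - L)) + (Φ (-L - x) - Φ (-L - x - L)))) := by
    apply intervalIntegral.intervalIntegral_pos_of_pos_on
    · exact (continuous_const.sub (hcontA.add hcontB)).intervalIntegrable _ _
    · intro x hx
      exact hGpair x hx.1 hx.2
    · linarith
  have E1 : (∫ x in (-L)..(0:ℝ),
        (Φ (2*L) - ((Φ x - Φ (x - L)) + (Φ (-L - x) - Φ (-L - x - L)))))
      = (∫ x in (-L)..(0:ℝ), Φ (2*L))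
        - ∫ x in (-L)..(0:ℝ), ((Φ x - Φ (x - L)) + (Φ (-L - x) - Φ (-L - x - L))) :=
    intervalIntegral.integral_sub intervalIntegrable_const (intA.add intB)
  have E2 : (∫ x in (-L)..(0:ℝ), ((Φ x - Φ (x - L)) + (Φ (-L - x) - Φ (-L - x - L))))
      = (∫ x in (-L)..(0:ℝ), (Φ x - Φ (x - L)))
        + ∫ x in (-L)..(0:ℝ), (Φ (-L - x) - Φ (-L - x - L)) :=
    intervalIntegral.integral_add intA intB
  have E3 : (∫ x in (-L)..(0:ℝ), Φ (2*L)) = L * Φ (2*L) := by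
    rw [intervalIntegral.integral_const]
    simp [smul_eq_mul]
  have E4 : (∫ x in (-L)..(0:ℝ), (Φ (-L - x) - Φ (-L - x - L)))
      = ∫ x in (-L)..(0:ℝ), (Φ x - Φ (x - L)) := by
    have h := intervalIntegral.integral_comp_sub_left (a := -L) (b := 0)
      (fun y : ℝ => Φ y - Φ (y - L)) (-L)
    norm_num at h
    exact h
  have hD0 : (∫ x in Set.Ioo (-L) (0:ℝ), ∫ y in Set.Ioo (0:ℝ) L, J (x - y))
      = ∫ x in (-L)..(0:ℝ), (Φ x - Φ (x - L)) := by
    simp only [hinner]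
    exact hIoo (-L) 0 _ (by linarith)
  have hRHS : (∫ z in Set.Ioo (0:ℝ) (2*L), J z) = Φ (2*L) := by
    rw [hIoo 0 (2*L) J (by linarith), hsub, hΦ0, sub_zero]
  -- outer integral for part 2
  have hF : ∀ x : ℝ, (∫ y in Set.Ioo (-L) L, J (x - y)) = Φ (x + L) - Φ (x - L) := by
    intro x
    rw [hIoo (-L) L (fun y => J (x - y)) (by linarith),
      intervalIntegral.integral_comp_sub_left J x, sub_neg_eq_add, hsub]
  have hlow : ∀ x : ℝ, -L ≤ x → x ≤ L → Φ (2*L) ≤ Φ (x + L) - Φ (x - L) := by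
    intro x hx1 hx2
    have m1 : (∫ t in (0:ℝ)..(L - x), J (x + L + t)) = ∫ t in (x + L)..(2*L), J t := by
      have h := intervalIntegral.integral_comp_add_left (a := (0:ℝ)) (b := L - x) J (x + L)
      rw [show x + L + 0 = x + L by ring, show x + L + (L - x) = 2*L by ring] at h
      exact h
    have m2 : (∫ t in (x - L)..(0:ℝ), J t) = ∫ t in (0:ℝ)..(L - x), J t := by
      have h := heven (x - L) 0
      rw [neg_zero, show -(x - L) = L - x by ring] at h
      exact h
    have m4 : (∫ t in (0:ℝ)..(L - x), J (x + L + t)) ≤ ∫ t in (0:ℝ)..(L - x), J t := by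
      apply intervalIntegral.integral_mono_on (by linarith)
        ((hJcont.comp (continuous_const.add continuous_id)).intervalIntegrable _ _)
        (hint _ _)
      intro t ht
      exact hJanti t (x + L + t) ht.1 (by linarith [ht.1])
    rw [m1, ← m2] at m4
    rw [hsub, hsub, hΦ0] at m4
    linarith
  constructor
  · -- strict inequality
    rw [hD0, hRHS]
    rw [div_mul_eq_mul_div, div_lt_iff₀ hL]
    have := big
    rw [E1, E2, E3, E4] at this
    linarith
  · -- infimum
    rw [hRHS]
    simp only [hF]
    haveI : Nonempty (Set.Icc (-L) L) := ⟨⟨L, ⟨by linarith, le_refl L⟩⟩⟩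
    have hbdd : BddBelow (Set.range fun x : Set.Icc (-L) L => Φ (↑x + L) - Φ (↑x - L)) := by
      refine ⟨Φ (2*L), ?_⟩
      rintro v ⟨x, rfl⟩
      exact hlow x x.2.1 x.2.2
    apply le_antisymm
    · exact le_ciInf fun x => hlow x x.2.1 x.2.2
    · have h1 : (⨅ x : Set.Icc (-L) L, (Φ (↑x + L) - Φ (↑x - L)))
          ≤ Φ (L + L) - Φ (L - L) := ciInf_le hbdd ⟨L, ⟨by linarith, le_refl L⟩⟩
      have h2 : Φ (L + L) - Φ (L - L) = Φ (2*L) := by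
        rw [show L + L = 2*L by ring, show L - L = (0:ℝ) by ring, hΦ0, sub_zero]
      linarith
end

section
/- Let Δ(L) = ∫_0^{2L} J(z) dz − (2/L)∫_0^L z J(z) dz − (2/L)∫_L^{2L} (2L−z) J(z) dz for an even, continuous, integrable J : ℝ → ℝ. Then Δ(L) = ∫_0^{L/2} (2t/L) [F(L/2 − t) − F(L/2 + t)] dt, where F(u) = J(u) + J(2L − u). In particular, if F is strictly decreasing on (0, L), then Δ(L) > 0. -/
open MeasureTheory intervalIntegral

/-- The rearrangement identity for `Δ(L)` and positivity when
`F(u) = J(u) + J(2L - u)` is strictly decreasing on `(0, L)`. -/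
theorem stmt_6 (J : ℝ → ℝ) (hJc : Continuous J) (hJeven : ∀ z, J (-z) = J z)
    (hJnn : ∀ z, 0 ≤ J z) (hJint : Integrable J)
    (L : ℝ) (hL : 0 < L)
    (F : ℝ → ℝ) (hF : F = fun u => J u + J (2*L - u))
    (Δ : ℝ)
    (hΔ : Δ = (∫ z in (0:ℝ)..(2*L), J z) - (2/L) * (∫ z in (0:ℝ)..L, z * J z)
        - (2/L) * ∫ z in L..(2*L), (2*L - z) * J z) :
    Δ = (∫ t in (0:ℝ)..(L/2), (2*t/L) * (F (L/2 - t) - F (L/2 + t))) ∧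
    (StrictAntiOn F (Set.Ioo 0 L) → 0 < Δ) := by
  have hL0 : L ≠ 0 := ne_of_gt hL
  have hFc : Continuous F := by rw [hF]; continuity
  set g : ℝ → ℝ := fun z => (1 - 2*z/L) * F z with hg
  have hgc : Continuous g := by
    apply Continuous.mul _ hFc
    continuity
  -- substitution in the third integral
  have h1 : (∫ z in L..(2*L), (2*L - z) * J z) = ∫ z in (0:ℝ)..L, z * J (2*L - z) := by
    have h := intervalIntegral.integral_comp_sub_left (a := 0) (b := L)
      (fun z => (2*L - z) * J z) (2*L)
    simp only [sub_sub_cancel] at h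
    rw [show 2*L - L = L by ring, show 2*L - (0:ℝ) = 2*L by ring] at h
    exact h.symm
  -- split the first integral and substitute in the second half
  have h2 : (∫ z in (0:ℝ)..(2*L), J z)
      = (∫ z in (0:ℝ)..L, J z) + ∫ z in (0:ℝ)..L, J (2*L - z) := by
    rw [← intervalIntegral.integral_add_adjacent_intervals
      (a := 0) (b := L) (c := 2*L) (hJc.intervalIntegrable _ _) (hJc.intervalIntegrable _ _)]
    congr 1
    have h := intervalIntegral.integral_comp_sub_left (a := 0) (b := L) J (2*L)
    rw [show 2*L - L = L by ring, show 2*L - (0:ℝ) = 2*L by ring] at h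
    exact h.symm
  have iJ2c : Continuous (fun z : ℝ => J (2*L - z)) :=
    hJc.comp (by continuity)
  have iJ2 : IntervalIntegrable (fun z : ℝ => J (2*L - z)) volume 0 L :=
    iJ2c.intervalIntegrable _ _
  have i1 : IntervalIntegrable (fun z : ℝ => J z + J (2*L - z)) volume 0 L := by
    apply Continuous.intervalIntegrable; continuity
  have i2 : IntervalIntegrable (fun z : ℝ => (2/L) * (z * J z)) volume 0 L := by
    apply Continuous.intervalIntegrable; continuity
  have i3 : IntervalIntegrable (fun z : ℝ => (2/L) * (z * J (2*L - z))) volume 0 L := by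
    apply Continuous.intervalIntegrable; continuity
  have e : ∀ z : ℝ, g z
      = (J z + J (2*L - z)) - (2/L) * (z * J z) - (2/L) * (z * J (2*L - z)) := by
    intro z; rw [hg, hF]; field_simp; ring
  -- Δ as a single weighted integral
  have hsplit : (∫ z in (0:ℝ)..L, g z)
      = ((∫ z in (0:ℝ)..L, J z) + ∫ z in (0:ℝ)..L, J (2*L - z))
        - (2/L) * (∫ z in (0:ℝ)..L, z * J z)
        - (2/L) * (∫ z in (0:ℝ)..L, z * J (2*L - z)) := by
    rw [← intervalIntegral.integral_add (hJc.intervalIntegrable _ _) iJ2,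
      ← intervalIntegral.integral_const_mul, ← intervalIntegral.integral_const_mul,
      ← intervalIntegral.integral_sub i1 i2,
      ← intervalIntegral.integral_sub (i1.sub i2) i3]
    exact intervalIntegral.integral_congr fun z _ => e z
  have hΔ2 : Δ = ∫ z in (0:ℝ)..L, g z := by
    rw [hΔ, h1, h2, hsplit]
  -- split at L/2 and fold
  have hs1 : (∫ z in (0:ℝ)..(L/2), g z) = ∫ t in (0:ℝ)..(L/2), g (L/2 - t) := by
    have h := intervalIntegral.integral_comp_sub_left (a := 0) (b := L/2) g (L/2)
    rw [show L/2 - L/2 = (0:ℝ) by ring, show L/2 - (0:ℝ) = L/2 by ring] at h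
    exact h.symm
  have hs2 : (∫ z in (L/2)..L, g z) = ∫ t in (0:ℝ)..(L/2), g (L/2 + t) := by
    have h := intervalIntegral.integral_comp_add_left (a := 0) (b := L/2) g (L/2)
    rw [show L/2 + (0:ℝ) = L/2 by ring, show L/2 + L/2 = L by ring] at h
    exact h.symm
  have ig1 : IntervalIntegrable (fun t : ℝ => g (L/2 - t)) volume 0 (L/2) :=
    (hgc.comp (continuous_const.sub continuous_id)).intervalIntegrable _ _
  have ig2 : IntervalIntegrable (fun t : ℝ => g (L/2 + t)) volume 0 (L/2) :=
    (hgc.comp (continuous_const.add continuous_id)).intervalIntegrable _ _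
  have key : Δ = ∫ t in (0:ℝ)..(L/2), (2*t/L) * (F (L/2 - t) - F (L/2 + t)) := by
    rw [hΔ2, ← intervalIntegral.integral_add_adjacent_intervals
        (a := 0) (b := L/2) (c := L) (hgc.intervalIntegrable _ _) (hgc.intervalIntegrable _ _),
      hs1, hs2, ← intervalIntegral.integral_add ig1 ig2]
    apply intervalIntegral.integral_congr
    intro t _
    simp only [hg]
    field_simp
    ring
  refine ⟨key, fun hSA => ?_⟩
  rw [key]
  apply intervalIntegral.intervalIntegral_pos_of_pos_on
  · exact (((continuous_const.mul continuous_id).div_const L).mul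
      ((hFc.comp (continuous_const.sub continuous_id)).sub
        (hFc.comp (continuous_const.add continuous_id)))).intervalIntegrable _ _
  · intro x hx
    obtain ⟨hx0, hxh⟩ := hx
    apply mul_pos
    · positivity
    · have hmem1 : L/2 - x ∈ Set.Ioo (0:ℝ) L := ⟨by linarith, by linarith⟩
      have hmem2 : L/2 + x ∈ Set.Ioo (0:ℝ) L := ⟨by linarith, by linarith⟩
      have := hSA hmem1 hmem2 (by linarith)
      linarith
  · linarith
end

section
/- Let J_p(z) = C_p e^{−λ|z|^p} with p > 1, λ > 0, and let η = L λ^{1/p}. Then Δ(L, λ) := ∫_0^{2L} J_p(z) dz − (2/L)∬_{(−L,0)×(0,L)} J_p(x−y) dx dy satisfies Δ(L, λ) > ∫_0^{2η} J̃_p(u) du − m̃₁/η, where J̃_p(u) = C̃_p e^{−|u|^p} is the unit-scale kernel and m̃₁ = ∫_ℝ |u| J̃_p(u) du. Consequently, there exists η₀ > 0 such that Δ(L, λ) > 0 whenever L λ^{1/p} > η₀. -/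
open MeasureTheory intervalIntegral

section Aux

open Set

private lemma my_integrable_comp_abs {f : ℝ → ℝ} (hf : IntegrableOn f (Set.Ioi 0)) :
    Integrable fun x => f |x| := by
  have hIoi : IntegrableOn (fun x => f |x|) (Set.Ioi 0) := by
    refine hf.congr_fun (fun x hx => ?_) measurableSet_Ioi
    rw [abs_of_pos hx]
  have int_Iic : IntegrableOn (fun x ↦ f |x|) (Set.Iic 0) := by
    rw [← Measure.map_neg_eq_self (volume : Measure ℝ)]
    let m : MeasurableEmbedding fun x : ℝ => -x := (Homeomorph.neg ℝ).measurableEmbedding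
    rw [m.integrableOn_map_iff]
    simp_rw [Function.comp_def, abs_neg, neg_preimage, neg_Iic, neg_zero]
    exact (integrableOn_Ici_iff_integrableOn_Ioi).mpr hIoi
  have := int_Iic.union hIoi
  rwa [Set.Iic_union_Ioi, integrableOn_univ] at this

private lemma Jt_integrable {p Ct : ℝ} (hp : 1 < p) :
    Integrable fun u : ℝ => Ct * Real.exp (-|u| ^ p) := by
  have h : IntegrableOn (fun x : ℝ => Ct * Real.exp (-x ^ p)) (Set.Ioi 0) := by
    have : IntegrableOn (fun x : ℝ => Ct * (x ^ (0:ℝ) * Real.exp (-x ^ p))) (Set.Ioi 0) :=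
      (integrableOn_rpow_mul_exp_neg_rpow (by norm_num : (-1:ℝ) < 0) (by linarith)).const_mul Ct
    refine this.congr_fun (fun x hx => ?_) measurableSet_Ioi
    beta_reduce; rw [Real.rpow_zero, one_mul]
  exact my_integrable_comp_abs (f := fun x => Ct * Real.exp (-x ^ p)) h

private lemma Jt_moment_integrable {p Ct : ℝ} (hp : 1 < p) :
    Integrable fun u : ℝ => |u| * (Ct * Real.exp (-|u| ^ p)) := by
  have h : IntegrableOn (fun x : ℝ => x * (Ct * Real.exp (-x ^ p))) (Set.Ioi 0) := by
    have : IntegrableOn (fun x : ℝ => Ct * (x ^ (1:ℝ) * Real.exp (-x ^ p))) (Set.Ioi 0) :=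
      (integrableOn_rpow_mul_exp_neg_rpow (by norm_num : (-1:ℝ) < 1) (by linarith)).const_mul Ct
    refine this.congr_fun (fun x hx => ?_) measurableSet_Ioi
    beta_reduce; rw [Real.rpow_one]; ring
  exact my_integrable_comp_abs (f := fun x => x * (Ct * Real.exp (-x ^ p))) h

private lemma my_integrableOn_comp_neg {f : ℝ → ℝ} {s : Set ℝ} (hf : IntegrableOn f s) :
    IntegrableOn (fun x => f (-x)) (-s) := by
  let m : MeasurableEmbedding fun x : ℝ => -x := (Homeomorph.neg ℝ).measurableEmbedding
  have h0 : IntegrableOn f s (Measure.map (fun x : ℝ => -x) volume) := by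
    rwa [Measure.map_neg_eq_self (volume : Measure ℝ)]
  have := (m.integrableOn_map_iff).mp h0
  exact this

private lemma tail_lemma {J : ℝ → ℝ} (hJm : Measurable J) (hJnn : ∀ t, 0 ≤ J t)
    (hJmi : Integrable fun t => |t| * J t) :
    IntegrableOn (fun s => ∫ t in Set.Ioi s, J t) (Set.Ioi 0) ∧
    ∫ s in Set.Ioi (0:ℝ), (∫ t in Set.Ioi s, J t) = ∫ t in Set.Ioi (0:ℝ), t * J t := by
  set μ : Measure ℝ := volume.restrict (Set.Ioi 0) with hμ
  set f : ℝ → ℝ → ℝ := fun s t => (Set.Ioi s).indicator J t with hf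
  have hslice : ∀ t, (fun s => f s t) = (Set.Iio t).indicator (fun _ => J t) := by
    intro t; funext s
    by_cases h : s < t <;>
      simp [hf, Set.indicator, Set.mem_Ioi, Set.mem_Iio, h]
  have hnn : ∀ s t, 0 ≤ f s t := fun s t => Set.indicator_nonneg (fun x _ => hJnn x) t
  have hμIio : ∀ t : ℝ, μ (Set.Iio t) = ENNReal.ofReal t := by
    intro t
    rw [hμ, Measure.restrict_apply measurableSet_Iio, Set.Iio_inter_Ioi, Real.volume_Ioo,
      sub_zero]
  have hmeas : Measurable (Function.uncurry f) := by
    have : Function.uncurry f = Set.indicator {q : ℝ × ℝ | q.1 < q.2} (fun q => J q.2) := by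
      funext q
      by_cases h : q.1 < q.2 <;>
        simp [Function.uncurry, hf, Set.indicator, Set.mem_Ioi, h]
    rw [this]
    exact (hJm.comp measurable_snd).indicator (measurableSet_lt measurable_fst measurable_snd)
  have hinner : ∀ t, ∫ s, f s t ∂μ = (ENNReal.ofReal t).toReal * J t := by
    intro t
    rw [hslice t, MeasureTheory.integral_indicator measurableSet_Iio, setIntegral_const, Measure.real, hμIio t, smul_eq_mul]
  have hsliceInt : ∀ t : ℝ, Integrable (fun s => f s t) μ := by
    intro t
    rw [hslice t, integrable_indicator_iff measurableSet_Iio]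
    refine (integrableOn_const_iff).mpr (Or.inr ?_)
    rw [Measure.restrict_apply measurableSet_Iio, Set.Iio_inter_Ioi, Real.volume_Ioo]
    exact ENNReal.ofReal_lt_top
  have hprodInt : Integrable (Function.uncurry f) (μ.prod μ) := by
    refine (integrable_prod_iff' hmeas.aestronglyMeasurable).mpr ⟨?_, ?_⟩
    · exact Filter.Eventually.of_forall fun t => hsliceInt t
    · have hcalc : ∀ t : ℝ, (∫ s, ‖f s t‖ ∂μ) = (ENNReal.ofReal t).toReal * J t := by
        intro t
        rw [← hinner t]
        refine integral_congr_ae (Filter.Eventually.of_forall fun s => ?_)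
        exact Real.norm_of_nonneg (hnn s t)
      have : (fun t => ∫ s, ‖Function.uncurry f (s, t)‖ ∂μ)
          = fun t => (ENNReal.ofReal t).toReal * J t := by
        funext t; exact hcalc t
      rw [this]
      refine (hJmi.restrict (s := Set.Ioi 0)).congr ?_
      refine (ae_restrict_iff' measurableSet_Ioi).mpr (Filter.Eventually.of_forall fun t ht => ?_)
      simp only []
      rw [ENNReal.toReal_ofReal (le_of_lt ht), abs_of_pos ht]
  have hT : ∀ s ∈ Set.Ioi (0:ℝ), (∫ t, f s t ∂μ) = ∫ t in Set.Ioi s, J t := by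
    intro s hs
    rw [MeasureTheory.integral_indicator measurableSet_Ioi, hμ,
      Measure.restrict_restrict measurableSet_Ioi, Set.Ioi_inter_Ioi,
      sup_eq_left.mpr (le_of_lt hs)]
  have swap := integral_integral_swap hprodInt
  have hRHS : (∫ t, (∫ s, f s t ∂μ) ∂μ) = ∫ t in Set.Ioi (0:ℝ), t * J t := by
    have : (fun t => ∫ s, f s t ∂μ) = fun t => (ENNReal.ofReal t).toReal * J t := by
      funext t; exact hinner t
    rw [this]
    refine setIntegral_congr_fun measurableSet_Ioi fun t ht => ?_
    rw [ENNReal.toReal_ofReal (le_of_lt ht)]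
  constructor
  · have hint := hprodInt.integral_prod_left
    refine hint.congr ?_
    refine (ae_restrict_iff' measurableSet_Ioi).mpr
      (Filter.Eventually.of_forall fun s hs => ?_)
    simpa using hT s hs
  · rw [← hRHS, ← swap]
    exact setIntegral_congr_fun measurableSet_Ioi fun s hs => (hT s hs).symm

private lemma key_lemma {J : ℝ → ℝ} (hJc : Continuous J) (hJpos : ∀ z, 0 < J z)
    (hJeven : ∀ z, J (-z) = J z) (hJi : Integrable J)
    (hJmi : Integrable fun t => |t| * J t) {L : ℝ} (hL : 0 < L) :
    2 * (∫ x in Set.Ioo (-L) 0, ∫ y in Set.Ioo 0 L, J (x - y)) < ∫ t, |t| * J t := by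
  set T : ℝ → ℝ := fun s => ∫ t in Set.Ioi s, J t with hTdef
  obtain ⟨hTint, hTeq⟩ := tail_lemma hJc.measurable (fun t => (hJpos t).le) hJmi
  have hJnn : ∀ t, 0 ≤ J t := fun t => (hJpos t).le
  have hTnn : ∀ s, 0 ≤ T s := fun s => setIntegral_nonneg measurableSet_Ioi fun t _ => hJnn t
  have hTanti : Antitone T := by
    intro s1 s2 h
    exact setIntegral_mono_set hJi.integrableOn (Filter.Eventually.of_forall fun t => hJnn t)
      (HasSubset.Subset.eventuallyLE (Set.Ioi_subset_Ioi h))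
  have hinner_le : ∀ x ∈ Set.Ioo (-L) (0:ℝ), (∫ y in Set.Ioo 0 L, J (x - y)) ≤ T (-x) := by
    intro x hx
    have h1 : (∫ y in Set.Ioo 0 L, J (x - y)) = ∫ y in (0:ℝ)..L, J (x - y) := by
      rw [intervalIntegral.integral_of_le hL.le, integral_Ioc_eq_integral_Ioo]
    have h2 : (∫ y in (0:ℝ)..L, J (x - y)) = ∫ t in (x - L)..(x - 0), J t :=
      intervalIntegral.integral_comp_sub_left J x
    have h3 : (∫ t in (x - L)..x, J t) = ∫ t in (-x)..(L - x), J t := by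
      calc ∫ t in (x - L)..x, J t = ∫ t in (-(L - x))..(-(-x)), J t := by
            rw [neg_sub, neg_neg]
        _ = ∫ t in (-x)..(L - x), J (-t) := (intervalIntegral.integral_comp_neg (f := J)).symm
        _ = ∫ t in (-x)..(L - x), J t := intervalIntegral.integral_congr fun t _ => hJeven t
    have h4 : (∫ t in (-x)..(L - x), J t) = ∫ t in Set.Ioc (-x) (L - x), J t :=
      intervalIntegral.integral_of_le (by linarith)
    have h5 : (∫ t in Set.Ioc (-x) (L - x), J t) ≤ T (-x) :=
      setIntegral_mono_set hJi.integrableOn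
        (Filter.Eventually.of_forall fun t => hJnn t)
        (HasSubset.Subset.eventuallyLE Set.Ioc_subset_Ioi_self)
    rw [h1, show x - 0 = x by ring] at *
    rw [h2, h3, h4]
    exact h5
  have hnegIoo : -(Set.Ioo (0:ℝ) L) = Set.Ioo (-L) 0 := by
    ext x
    simp only [Set.mem_neg, Set.mem_Ioo]
    constructor <;> intro h <;> constructor <;> linarith [h.1, h.2]
  have hTneg_int : IntegrableOn (fun x => T (-x)) (Set.Ioo (-L) 0) := by
    have h1 : IntegrableOn T (Set.Ioo 0 L) := hTint.mono_set Set.Ioo_subset_Ioi_self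
    have := my_integrableOn_comp_neg h1
    rwa [hnegIoo] at this
  have hstep2 : (∫ x in Set.Ioo (-L) 0, ∫ y in Set.Ioo 0 L, J (x - y))
      ≤ ∫ x in Set.Ioo (-L) 0, T (-x) := by
    refine integral_mono_of_nonneg ?_ hTneg_int ?_
    · exact Filter.Eventually.of_forall fun x =>
        setIntegral_nonneg measurableSet_Ioo fun y _ => hJnn _
    · exact (ae_restrict_iff' measurableSet_Ioo).mpr
        (Filter.Eventually.of_forall fun x hx => hinner_le x hx)
  have hstep3 : (∫ x in Set.Ioo (-L) 0, T (-x)) = ∫ s in Set.Ioo 0 L, T s := by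
    rw [← integral_Ioc_eq_integral_Ioo, ← intervalIntegral.integral_of_le (by linarith : -L ≤ 0),
      ← integral_Ioc_eq_integral_Ioo, ← intervalIntegral.integral_of_le hL.le]
    have := intervalIntegral.integral_comp_neg (f := T) (a := -L) (b := 0)
    rw [this, neg_zero, neg_neg]
  have hIciL : Set.Ici L ⊆ Set.Ioi (0:ℝ) := fun x hx => lt_of_lt_of_le hL hx
  have hdisj : Disjoint (Set.Ioo (0:ℝ) L) (Set.Ici L) :=
    Set.disjoint_left.mpr fun x hx hx2 => absurd hx.2 (not_lt.mpr hx2)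
  have hsplit : (∫ s in Set.Ioi (0:ℝ), T s)
      = (∫ s in Set.Ioo 0 L, T s) + ∫ s in Set.Ici L, T s := by
    rw [← setIntegral_union hdisj measurableSet_Ici
      (hTint.mono_set Set.Ioo_subset_Ioi_self) (hTint.mono_set hIciL),
      Set.Ioo_union_Ici_eq_Ioi hL]
  have hTL1 : 0 < T (L + 1) := by
    rw [hTdef]
    refine (setIntegral_pos_iff_support_of_nonneg_ae
      (Filter.Eventually.of_forall fun t => hJnn t) hJi.integrableOn).mpr ?_
    have hsupp : Function.support J = Set.univ :=
      Set.eq_univ_iff_forall.mpr fun x => Function.mem_support.mpr (hJpos x).ne'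
    rw [hsupp, Set.univ_inter, Real.volume_Ioi]
    exact ENNReal.zero_lt_top
  have hconst : T (L + 1) * ((volume (Set.Ioc L (L + 1))).toReal)
      ≤ ∫ s in Set.Ioc L (L + 1), T s := by
    refine setIntegral_ge_of_const_le_real measurableSet_Ioc ?_ ?_ ?_
    · rw [Real.volume_Ioc]; exact ENNReal.ofReal_ne_top
    · intro s hs; exact hTanti hs.2
    · exact hTint.mono_set (fun x hx => lt_of_lt_of_le hL hx.1.le)
  have hvol : ((volume (Set.Ioc L (L + 1))).toReal) = 1 := by
    rw [Real.volume_Ioc]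
    norm_num
  have hIciTail : (∫ s in Set.Ioc L (L + 1), T s) ≤ ∫ s in Set.Ici L, T s :=
    setIntegral_mono_set (hTint.mono_set hIciL)
      (Filter.Eventually.of_forall fun s => hTnn s)
      (HasSubset.Subset.eventuallyLE fun x hx => hx.1.le)
  have hpos : 0 < ∫ s in Set.Ici L, T s := by
    rw [hvol] at hconst
    nlinarith [hTL1]
  have hstep4 : (∫ s in Set.Ioo 0 L, T s) < ∫ s in Set.Ioi 0, T s := by
    linarith
  have heven : (∫ t, |t| * J t) = 2 * ∫ t in Set.Ioi 0, t * J t := by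
    have habs : (fun t : ℝ => |t| * J t) = fun t => |t| * J |t| := by
      funext t
      rcases le_or_gt 0 t with h | h
      · rw [abs_of_nonneg h]
      · rw [abs_of_neg h, hJeven]
    rw [habs]
    exact integral_comp_abs (f := fun u => u * J u)
  linarith

end Aux

/-- For `p > 1`: lower bound of `Δ(L, λ)` in terms of the unit-scale kernel,
and existence of a threshold `η₀` beyond which the gap condition holds. -/
theorem stmt_8 (p : ℝ) (hp : 1 < p)
    (Jt : ℝ → ℝ) (Ct : ℝ) (hCt : 0 < Ct)
    (hJt : Jt = fun u => Ct * Real.exp (-|u| ^ p))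
    (hJtnorm : ∫ u, Jt u = 1)
    (m₁t : ℝ) (hm₁t : m₁t = ∫ u, |u| * Jt u) :
    (∀ (L lam C : ℝ), 0 < L → 0 < lam → 0 < C →
      (fun z => C * Real.exp (-lam * |z| ^ p))
          = (fun z => lam ^ (1/p) * Jt (lam ^ (1/p) * z)) →
      ((∫ z in (0:ℝ)..(2*L), C * Real.exp (-lam * |z| ^ p))
          - (2/L) * ∫ x in Set.Ioo (-L) (0:ℝ), ∫ y in Set.Ioo (0:ℝ) L,
              C * Real.exp (-lam * |x - y| ^ p))
        > (∫ u in (0:ℝ)..(2 * (L * lam ^ (1/p))), Jt u) - m₁t / (L * lam ^ (1/p))) ∧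
    (∃ η₀ > (0:ℝ), ∀ (L lam C : ℝ), 0 < L → 0 < lam → 0 < C →
      (fun z => C * Real.exp (-lam * |z| ^ p))
          = (fun z => lam ^ (1/p) * Jt (lam ^ (1/p) * z)) →
      L * lam ^ (1/p) > η₀ →
      (∫ z in (0:ℝ)..(2*L), C * Real.exp (-lam * |z| ^ p))
          - (2/L) * (∫ x in Set.Ioo (-L) (0:ℝ), ∫ y in Set.Ioo (0:ℝ) L,
              C * Real.exp (-lam * |x - y| ^ p)) > 0) := by
  have hJti : Integrable Jt := by rw [hJt]; exact Jt_integrable hp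
  have hJtmi : Integrable (fun u => |u| * Jt u) := by
    rw [hJt]; exact Jt_moment_integrable hp
  have hJtpos : ∀ u, 0 < Jt u := by
    intro u; rw [hJt]; exact mul_pos hCt (Real.exp_pos _)
  have part1 : ∀ (L lam C : ℝ), 0 < L → 0 < lam → 0 < C →
      (fun z => C * Real.exp (-lam * |z| ^ p))
          = (fun z => lam ^ (1/p) * Jt (lam ^ (1/p) * z)) →
      ((∫ z in (0:ℝ)..(2*L), C * Real.exp (-lam * |z| ^ p))
          - (2/L) * ∫ x in Set.Ioo (-L) (0:ℝ), ∫ y in Set.Ioo (0:ℝ) L,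
              C * Real.exp (-lam * |x - y| ^ p))
        > (∫ u in (0:ℝ)..(2 * (L * lam ^ (1/p))), Jt u) - m₁t / (L * lam ^ (1/p)) := by
    intro L lam C hL hlam hC hfun
    set a : ℝ := lam ^ (1/p) with ha_def
    have ha : 0 < a := Real.rpow_pos_of_pos hlam _
    set J : ℝ → ℝ := fun z => C * Real.exp (-lam * |z| ^ p) with hJ_def
    have hJc : Continuous J := by
      have habs : Continuous fun z : ℝ => |z| ^ p :=
        continuous_abs.rpow_const (fun z => Or.inr (by linarith))
      exact continuous_const.mul (Real.continuous_exp.comp (continuous_const.mul habs))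
    have hJpos : ∀ z, 0 < J z := fun z => mul_pos hC (Real.exp_pos _)
    have hJeven : ∀ z, J (-z) = J z := by
      intro z; simp only [hJ_def, abs_neg]
    have hfun' : ∀ z, J z = a * Jt (a * z) := fun z => congrFun hfun z
    have hmom_eq : (fun t : ℝ => |t| * J t) = fun t => (fun u => |u| * Jt u) (a * t) := by
      funext t
      simp only []
      rw [hfun' t, abs_mul, abs_of_pos ha]
      ring
    have hJi : Integrable J := by
      rw [show J = fun z => a * Jt (a * z) from hfun]
      exact ((integrable_comp_mul_left_iff Jt ha.ne').mpr hJti).const_mul a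
    have hJmi : Integrable fun t => |t| * J t := by
      rw [hmom_eq]
      exact (integrable_comp_mul_left_iff (fun u => |u| * Jt u) ha.ne').mpr hJtmi
    have hmoment : (∫ t, |t| * J t) = m₁t / a := by
      rw [hmom_eq, MeasureTheory.Measure.integral_comp_mul_left (fun u => |u| * Jt u) a, ← hm₁t,
        abs_of_pos (inv_pos.mpr ha), smul_eq_mul, div_eq_inv_mul]
    have hterm1 : (∫ z in (0:ℝ)..(2*L), C * Real.exp (-lam * |z| ^ p))
        = ∫ u in (0:ℝ)..(2 * (L * a)), Jt u := by
      rw [intervalIntegral.integral_congr (fun z _ => hfun' z)]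
      have h2 : (∫ z in (0:ℝ)..(2*L), a * Jt (a * z))
          = a • ∫ z in (0:ℝ)..(2*L), Jt (a * z) := by
        simp_rw [← smul_eq_mul (a := a)]
        rw [intervalIntegral.integral_smul]
      rw [h2, intervalIntegral.smul_integral_comp_mul_left Jt a, mul_zero,
        show a * (2 * L) = 2 * (L * a) by ring]
    have hkey := key_lemma hJc hJpos hJeven hJi hJmi hL
    rw [hmoment] at hkey
    have hLa : 0 < L * a := mul_pos hL ha
    have hdd : (∫ x in Set.Ioo (-L) (0:ℝ), ∫ y in Set.Ioo (0:ℝ) L,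
        C * Real.exp (-lam * |x - y| ^ p))
        = ∫ x in Set.Ioo (-L) (0:ℝ), ∫ y in Set.Ioo (0:ℝ) L, J (x - y) := rfl
    have hfrac : (2/L) * (∫ x in Set.Ioo (-L) (0:ℝ), ∫ y in Set.Ioo (0:ℝ) L, J (x - y))
        < m₁t / (L * a) := by
      have h1 : (2/L) * (∫ x in Set.Ioo (-L) (0:ℝ), ∫ y in Set.Ioo (0:ℝ) L, J (x - y))
          = (2 * (∫ x in Set.Ioo (-L) (0:ℝ), ∫ y in Set.Ioo (0:ℝ) L, J (x - y))) / L := by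
        ring
      have h2 : (2 * (∫ x in Set.Ioo (-L) (0:ℝ), ∫ y in Set.Ioo (0:ℝ) L, J (x - y))) / L
          < (m₁t / a) / L := by gcongr
      rw [h1, div_div, mul_comm a L] at *
      exact h2
    rw [hterm1, hdd]
    linarith
  refine ⟨part1, ?_⟩
  have hm₁nn : 0 ≤ m₁t := by
    rw [hm₁t]
    exact integral_nonneg fun u => mul_nonneg (abs_nonneg u) (hJtpos u).le
  have hc : 0 < ∫ u in (0:ℝ)..2, Jt u :=
    intervalIntegral.intervalIntegral_pos_of_pos hJti.intervalIntegrable hJtpos (by norm_num)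
  set c : ℝ := ∫ u in (0:ℝ)..2, Jt u with hc_def
  refine ⟨1 + m₁t / c, by positivity, ?_⟩
  intro L lam C hL hlam hC hfun hη
  have := part1 L lam C hL hlam hC hfun
  set η : ℝ := L * lam ^ (1/p) with hη_def
  have hηpos : 0 < η := mul_pos hL (Real.rpow_pos_of_pos hlam _)
  have hη1 : 1 < η := lt_of_le_of_lt (le_add_of_nonneg_right (by positivity)) hη
  have hmono : c ≤ ∫ u in (0:ℝ)..(2 * η), Jt u := by
    refine intervalIntegral.integral_mono_interval le_rfl (by norm_num) (by nlinarith)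
      (Filter.Eventually.of_forall fun u => (hJtpos u).le) hJti.intervalIntegrable
  have hdiv : m₁t / η < c := by
    rw [div_lt_iff₀ hηpos]
    have hmul := mul_lt_mul_of_pos_left hη hc
    have : c * (m₁t / c) = m₁t := by field_simp
    nlinarith
  linarith
end

section
/- Let Ω₀ ⊂ ℝⁿ be open, bounded, nonempty, satisfying a uniform interior sphere condition, and let Ω_λ = λΩ₀. If J ∈ C⁰(ℝⁿ) is nonnegative, symmetric, and ∫_{ℝⁿ} J = 1, then liminf_{λ→∞} min_{x∈Ω̄_λ} ∫_{Ω_λ} J(x−y) dy ≥ 1/2. -/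
open MeasureTheory Filter Pointwise RealInnerProductSpace Metric ENNReal

lemma plane_null {n : ℕ} {v : EuclideanSpace ℝ (Fin n)} (hv : v ≠ 0) :
    volume {z : EuclideanSpace ℝ (Fin n) | ⟪z, v⟫ = 0} = 0 := by
  have h1 : {z : EuclideanSpace ℝ (Fin n) | ⟪z, v⟫ = 0} = ((ℝ ∙ v)ᗮ : Submodule ℝ _) := by
    ext z
    rw [Set.mem_setOf_eq, SetLike.mem_coe, Submodule.mem_orthogonal_singleton_iff_inner_right,
      real_inner_comm]
  rw [h1]
  apply Measure.addHaar_submodule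
  intro h
  have : v ∈ (ℝ ∙ v)ᗮ := h ▸ Submodule.mem_top
  have h2 := (Submodule.mem_orthogonal_singleton_iff_inner_right).mp this
  exact hv (inner_self_eq_zero.mp h2)

lemma halfspace_integral {n : ℕ} (J : EuclideanSpace ℝ (Fin n) → ℝ)
    (hJi : Integrable J) (hJsym : ∀ z, J (-z) = J z) (hJnorm : ∫ z, J z = 1)
    {v : EuclideanSpace ℝ (Fin n)} (hv : v ≠ 0) :
    ∫ z in {z | ⟪z, v⟫ < 0}, J z = 1/2 := by
  have hcont : Continuous fun z : EuclideanSpace ℝ (Fin n) => ⟪z, v⟫ :=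
    continuous_id.inner continuous_const
  have hmeas : MeasurableSet {z : EuclideanSpace ℝ (Fin n) | ⟪z, v⟫ < 0} :=
    measurableSet_lt hcont.measurable measurable_const
  have hplane : volume {z : EuclideanSpace ℝ (Fin n) | ⟪z, v⟫ = 0} = 0 := plane_null hv
  have hadd := integral_add_compl hmeas hJi (f := J)
  have hae : ({z : EuclideanSpace ℝ (Fin n) | ⟪z, v⟫ < 0}ᶜ : Set (EuclideanSpace ℝ (Fin n))) =ᵐ[volume]
      {z : EuclideanSpace ℝ (Fin n) | 0 < ⟪z, v⟫} := by
    rw [MeasureTheory.ae_eq_set]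
    constructor
    · apply measure_mono_null _ hplane
      rintro z ⟨h1, h2⟩
      rw [Set.mem_compl_iff, Set.mem_setOf_eq, not_lt] at h1
      simp only [Set.mem_setOf_eq, not_lt] at h2 ⊢
      linarith
    · apply measure_mono_null _ hplane
      rintro z ⟨h1, h2⟩
      rw [Set.mem_compl_iff, Set.mem_setOf_eq, not_lt] at h2
      push_neg at h2
      simp only [Set.mem_setOf_eq] at h1 ⊢
      linarith
  have h2 : ∫ z in ({z : EuclideanSpace ℝ (Fin n) | ⟪z, v⟫ < 0}ᶜ), J z
      = ∫ z in {z : EuclideanSpace ℝ (Fin n) | 0 < ⟪z, v⟫}, J z :=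
    setIntegral_congr_set hae
  have hemb : MeasurableEmbedding (fun z : EuclideanSpace ℝ (Fin n) => -z) :=
    (Homeomorph.neg (EuclideanSpace ℝ (Fin n))).measurableEmbedding
  have h3 := (Measure.measurePreserving_neg
      (volume : Measure (EuclideanSpace ℝ (Fin n)))).setIntegral_preimage_emb hemb J
      {z : EuclideanSpace ℝ (Fin n) | 0 < ⟪z, v⟫}
  have hpre : (fun z : EuclideanSpace ℝ (Fin n) => -z) ⁻¹' {z | 0 < ⟪z, v⟫}
      = {z : EuclideanSpace ℝ (Fin n) | ⟪z, v⟫ < 0} := by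
    ext z
    simp [inner_neg_left]
  rw [hpre] at h3
  simp only [hJsym] at h3
  rw [hJnorm] at hadd
  rw [h2, ← h3] at hadd
  linarith

lemma aux_geom {ρ ε d R zn iv : ℝ} (hρ1 : 1 ≤ ρ) (hε : 0 < ε) (hd0 : 0 < d) (hdR : d ≤ R)
    (hR1 : 2*ρ + 1 ≤ R) (hR2 : ρ^2/ε + 1 ≤ R) (hzn : zn ≤ ρ) (hzn0 : 0 ≤ zn)
    (hiv : iv ≤ -ε) : zn^2 - 2*(-(d*iv)) + d^2 < R^2 := by
  have hz2 : zn^2 ≤ ρ^2 := by nlinarith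
  have hmul : 2*d*iv ≤ 2*d*(-ε) := mul_le_mul_of_nonneg_left hiv (by positivity)
  rcases le_or_gt d (R/2) with hc | hc
  · nlinarith [mul_self_le_mul_self hd0.le hc, mul_pos hd0 hε]
  · have hεR : ρ^2 + ε ≤ ε*R := by
      have h7 : ρ^2/ε ≤ R - 1 := by linarith
      have h8 := (div_le_iff₀ hε).mp h7
      nlinarith
    nlinarith [mul_self_le_mul_self hd0.le hdR, mul_lt_mul_of_pos_right hc hε]

lemma ball_integral_lower {n : ℕ} (J : EuclideanSpace ℝ (Fin n) → ℝ)
    (hJi : Integrable J) (hJc : Continuous J) (hJnn : ∀ z, 0 ≤ J z)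
    (hJsym : ∀ z, J (-z) = J z) (hJnorm : ∫ z, J z = 1)
    (hhalf : ∀ v : EuclideanSpace ℝ (Fin n), v ≠ 0 → ∫ z in {z | ⟪z, v⟫ < 0}, J z = 1/2)
    {δ : ℝ} (hδ : 0 < δ) :
    ∃ R₀ : ℝ, 0 < R₀ ∧ ∀ R, R₀ ≤ R → ∀ b : EuclideanSpace ℝ (Fin n), ‖b‖ ≤ R →
      1/2 - δ ≤ ∫ z in Metric.ball b R, J z := by
  rcases Nat.eq_zero_or_pos n with hn | hn
  · subst hn
    haveI : Unique (EuclideanSpace ℝ (Fin 0)) := ⟨⟨0⟩, fun a => by ext i; exact i.elim0⟩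
    refine ⟨1, one_pos, fun R hR b hb => ?_⟩
    have huniv : Metric.ball b R = Set.univ := by
      ext z
      have hz : z = b := Subsingleton.elim z b
      simp only [Metric.mem_ball, hz, dist_self, Set.mem_univ, iff_true]
      linarith
    rw [huniv, Measure.restrict_univ, hJnorm]; linarith
  -- positive dimension
  set e : EuclideanSpace ℝ (Fin n) := EuclideanSpace.single (⟨0, hn⟩ : Fin n) (1:ℝ) with he_def
  have he : ‖e‖ = 1 := by simp [he_def, EuclideanSpace.norm_single]
  have hene : e ≠ 0 := by intro h; rw [h, norm_zero] at he; norm_num at he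
  -- choose ρ
  have htend := MeasureTheory.tendsto_setIntegral_of_monotone
      (s := fun k : ℕ => Metric.closedBall (0 : EuclideanSpace ℝ (Fin n)) k)
      (fun k => measurableSet_closedBall)
      (fun i j hij => Metric.closedBall_subset_closedBall (by exact_mod_cast hij))
      (by rw [Metric.iUnion_closedBall_nat]; exact hJi.integrableOn)
  rw [Metric.iUnion_closedBall_nat, Measure.restrict_univ, hJnorm] at htend
  obtain ⟨k₀, hk₀⟩ := ((htend.eventually_const_lt (show 1 - δ/2 < 1 by linarith)).and
      (eventually_ge_atTop 1)).exists
  set ρ : ℝ := (k₀ : ℝ) with hρ_def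
  have hρ1 : 1 ≤ ρ := by rw [hρ_def]; exact_mod_cast hk₀.2
  have hρ0 : 0 < ρ := by linarith
  set B := Metric.closedBall (0 : EuclideanSpace ℝ (Fin n)) ρ with hB_def
  have hBmeas : MeasurableSet B := measurableSet_closedBall
  have hBint : 1 - δ/2 < ∫ z in B, J z := hk₀.1
  have htail : ∫ z in Bᶜ, J z ≤ δ/2 := by
    have := integral_add_compl hBmeas hJi (f := J)
    rw [hJnorm] at this
    linarith
  -- sup of J on B
  obtain ⟨z₀, hz₀B, hz₀⟩ := (isCompact_closedBall (0 : EuclideanSpace ℝ (Fin n)) ρ).exists_isMaxOn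
      ⟨0, by simp [hρ0.le]⟩ hJc.continuousOn
  set M := J z₀ with hM_def
  have hM0 : 0 ≤ M := hJnn z₀
  have hz₀' : ∀ z ∈ B, J z ≤ M := fun z hz => hz₀ hz
  -- slab sets
  set A : ℕ → Set (EuclideanSpace ℝ (Fin n)) :=
    fun k => {z | |⟪z, e⟫| ≤ 1/(k+1)} ∩ B with hA_def
  have hAmeas : ∀ k, MeasurableSet (A k) := by
    intro k
    exact ((isClosed_le (continuous_abs.comp (continuous_id.inner continuous_const))
      continuous_const).measurableSet).inter hBmeas
  have hAanti : Antitone A := by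
    intro i j hij
    apply Set.inter_subset_inter_left
    intro z hz
    simp only [Set.mem_setOf_eq] at hz ⊢
    refine hz.trans ?_
    apply one_div_le_one_div_of_le (by positivity)
    exact_mod_cast by omega
  have hAint : ⋂ k, A k ⊆ {z : EuclideanSpace ℝ (Fin n) | ⟪z, e⟫ = 0} := by
    intro z hz
    simp only [Set.mem_iInter, hA_def, Set.mem_inter_iff, Set.mem_setOf_eq] at hz
    by_contra h
    have habs : 0 < |⟪z, e⟫| := abs_pos.mpr h
    obtain ⟨k, hk⟩ := exists_nat_one_div_lt habs
    exact absurd ((hz k).1) (not_le.mpr (by exact_mod_cast hk))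
  have hAnull : volume (⋂ k, A k) = 0 :=
    measure_mono_null hAint (plane_null hene)
  have htend2 := tendsto_measure_iInter_atTop (μ := volume)
      (fun k => (hAmeas k).nullMeasurableSet) hAanti
      ⟨0, by
        refine ne_of_lt (lt_of_le_of_lt (measure_mono Set.inter_subset_right) ?_)
        exact measure_closedBall_lt_top⟩
  rw [hAnull] at htend2
  have hδM : (0:ℝ≥0∞) < ENNReal.ofReal (δ/(2*(M+1))) := by
    rw [ENNReal.ofReal_pos]; positivity
  obtain ⟨k₁, hk₁⟩ := (htend2.eventually_lt_const hδM).exists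
  set ε : ℝ := 1/(k₁+1) with hε_def
  have hε : 0 < ε := by positivity
  have hslab : M * (volume (A k₁)).toReal ≤ δ/2 := by
    have h1 : (volume (A k₁)).toReal ≤ δ/(2*(M+1)) := by
      apply ENNReal.toReal_le_of_le_ofReal (by positivity) hk₁.le
    have h2 : 0 ≤ (volume (A k₁)).toReal := ENNReal.toReal_nonneg
    have h3 : M * (volume (A k₁)).toReal ≤ M * (δ/(2*(M+1))) :=
      mul_le_mul_of_nonneg_left h1 hM0
    have h4 : M * (δ/(2*(M+1))) ≤ δ/2 := by
      have h5 : M/(M+1) ≤ 1 := by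
        rw [div_le_one (by positivity)]; linarith
      rw [mul_div_assoc', div_le_div_iff₀ (by positivity) two_pos]
      nlinarith [mul_nonneg hM0 hδ.le]
    linarith
  refine ⟨max (2*ρ + 1) (ρ^2/ε + 1), by positivity, fun R hR b hb => ?_⟩
  have hR1 : 2*ρ + 1 ≤ R := le_trans (le_max_left _ _) hR
  have hR2 : ρ^2/ε + 1 ≤ R := le_trans (le_max_right _ _) hR
  have hRρ : ρ < R := by linarith
  have hR0 : 0 < R := by linarith
  by_cases hb0 : b = 0
  · subst hb0
    have hsub : B ⊆ Metric.ball (0 : EuclideanSpace ℝ (Fin n)) R := by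
      intro z hz
      rw [hB_def, Metric.mem_closedBall] at hz
      rw [Metric.mem_ball]
      linarith
    have hmono := setIntegral_mono_set (hJi.integrableOn)
      (Eventually.of_forall fun z => hJnn z) (HasSubset.Subset.eventuallyLE hsub)
    linarith [hmono, hBint]
  set d : ℝ := ‖b‖ with hd_def
  have hd0 : 0 < d := norm_pos_iff.mpr hb0
  have hdR : d ≤ R := hb
  set v : EuclideanSpace ℝ (Fin n) := (-(d⁻¹)) • b with hv_def
  have hv1 : ‖v‖ = 1 := by
    rw [hv_def, norm_smul]
    simp only [norm_neg, norm_inv, Real.norm_eq_abs, abs_inv, abs_of_pos hd0]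
    rw [← hd_def]
    field_simp
  have hvne : v ≠ 0 := by intro h; rw [h, norm_zero] at hv1; norm_num at hv1
  have hinner_b : ∀ z : EuclideanSpace ℝ (Fin n), ⟪z, b⟫ = -(d * ⟪z, v⟫) := by
    intro z
    rw [hv_def, real_inner_smul_right]
    field_simp
  set T : Set (EuclideanSpace ℝ (Fin n)) := {z | ⟪z, v⟫ ≤ -ε} with hT_def
  set H : Set (EuclideanSpace ℝ (Fin n)) := {z | ⟪z, v⟫ < 0} with hH_def
  set A' : Set (EuclideanSpace ℝ (Fin n)) := {z | |⟪z, v⟫| ≤ ε} ∩ B with hA'_def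
  have hvcont : Continuous fun z : EuclideanSpace ℝ (Fin n) => ⟪z, v⟫ :=
    continuous_id.inner continuous_const
  have hTmeas : MeasurableSet T := (isClosed_le hvcont continuous_const).measurableSet
  have hHmeas : MeasurableSet H := measurableSet_lt hvcont.measurable measurable_const
  have hA'meas : MeasurableSet A' :=
    ((isClosed_le (continuous_abs.comp hvcont) continuous_const).measurableSet).inter hBmeas
  -- S := B ∩ T is inside the ball
  have hSsub : B ∩ T ⊆ Metric.ball b R := by
    rintro z ⟨hzB, hzv⟩
    rw [hB_def, Metric.mem_closedBall, dist_zero_right] at hzB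
    rw [hT_def, Set.mem_setOf_eq] at hzv
    rw [Metric.mem_ball, dist_eq_norm]
    have hsq : ‖z - b‖^2 = ‖z‖^2 - 2*⟪z, b⟫ + ‖b‖^2 := norm_sub_sq_real z b
    rw [hinner_b z, ← hd_def] at hsq
    have hlt : ‖z - b‖^2 < R^2 := by
      rw [hsq]
      exact aux_geom hρ1 hε hd0 hdR hR1 hR2 hzB (norm_nonneg z) hzv
    exact lt_of_pow_lt_pow_left₀ 2 hR0.le hlt
  have hnonneg : ∀ μ : Measure (EuclideanSpace ℝ (Fin n)), 0 ≤ᵐ[μ] J :=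
    fun μ => Eventually.of_forall hJnn
  -- half space
  have h_half : ∫ z in H, J z = 1/2 := hhalf v hvne
  have split1 := integral_inter_add_diff (s := H) hBmeas hJi.integrableOn (f := J) (μ := volume)
  have hHB2 : ∫ z in H \ B, J z ≤ ∫ z in Bᶜ, J z :=
    setIntegral_mono_set hJi.integrableOn (hnonneg _)
      (HasSubset.Subset.eventuallyLE (Set.diff_subset_compl _ _))
  have hHB : 1/2 - δ/2 ≤ ∫ z in H ∩ B, J z := by
    rw [h_half] at split1
    linarith
  have split2 := integral_inter_add_diff (s := H ∩ B) hTmeas hJi.integrableOn (f := J) (μ := volume)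
  have hpart1 : ∫ z in (H ∩ B) ∩ T, J z ≤ ∫ z in B ∩ T, J z :=
    setIntegral_mono_set hJi.integrableOn (hnonneg _)
      (HasSubset.Subset.eventuallyLE (Set.inter_subset_inter_left _ Set.inter_subset_right))
  have hpart2 : ∫ z in (H ∩ B) \ T, J z ≤ ∫ z in A', J z := by
    apply setIntegral_mono_set hJi.integrableOn (hnonneg _)
    apply HasSubset.Subset.eventuallyLE
    rintro z ⟨⟨hzH, hzB⟩, hzT⟩
    rw [hH_def, Set.mem_setOf_eq] at hzH
    rw [hT_def, Set.mem_setOf_eq, not_le] at hzT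
    exact ⟨by rw [Set.mem_setOf_eq, abs_le]; constructor <;> linarith, hzB⟩
  have hSball : ∫ z in B ∩ T, J z ≤ ∫ z in Metric.ball b R, J z :=
    setIntegral_mono_set hJi.integrableOn (hnonneg _) (HasSubset.Subset.eventuallyLE hSsub)
  -- bound the slab integral
  have hA'vol_lt : volume A' < ⊤ :=
    lt_of_le_of_lt (measure_mono Set.inter_subset_right) measure_closedBall_lt_top
  have hconst : IntegrableOn (fun _ => M) A' volume :=
    integrableOn_const hA'vol_lt.ne
  have hA'bound : ∫ z in A', J z ≤ M * (volume A').toReal := by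
    have h9 := setIntegral_mono_on hJi.integrableOn hconst hA'meas
      (fun z hz => hz₀' z hz.2)
    rwa [setIntegral_const, smul_eq_mul, mul_comm] at h9
  have hA'eq : volume A' = volume (A k₁) := by
    obtain ⟨f, hf⟩ : ∃ f : EuclideanSpace ℝ (Fin n) ≃ₗᵢ[ℝ] EuclideanSpace ℝ (Fin n), f e = v :=
      ⟨Submodule.reflection (ℝ ∙ (e - v))ᗮ, Submodule.reflection_sub (by rw [he, hv1])⟩
    have hpre : (⇑f) ⁻¹' A' = A k₁ := by
      ext z
      simp only [Set.mem_preimage, hA'_def, hA_def, Set.mem_inter_iff, Set.mem_setOf_eq,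
        hB_def, Metric.mem_closedBall, dist_zero_right, LinearIsometryEquiv.norm_map, ← hε_def]
      rw [← hf, f.inner_map_map]
    have h10 := f.measurePreserving.measure_preimage (hA'meas.nullMeasurableSet)
    rw [hpre] at h10
    exact h10.symm
  have hA'2 : ∫ z in A', J z ≤ δ/2 := by
    rw [hA'eq] at hA'bound
    linarith
  linarith [hSball, hpart1, hpart2, split2, hHB, hA'2]

/-- Asymptotic lower bound for the minimal retained mass on scaled domains. -/
theorem stmt_9 (n : ℕ) (Ω₀ : Set (EuclideanSpace ℝ (Fin n)))
    (hΩo : IsOpen Ω₀) (hΩb : Bornology.IsBounded Ω₀) (hΩne : Ω₀.Nonempty)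
    (hsphere : ∃ r₀ > (0:ℝ), ∀ x ∈ closure Ω₀, ∃ c,
        Metric.ball c r₀ ⊆ Ω₀ ∧ x ∈ Metric.closedBall c r₀)
    (J : EuclideanSpace ℝ (Fin n) → ℝ)
    (hJc : Continuous J) (hJnn : ∀ z, 0 ≤ J z) (hJsym : ∀ z, J (-z) = J z)
    (hJnorm : ∫ z, J z = 1) :
    (1/2 : ℝ) ≤ Filter.liminf
      (fun lam : ℝ =>
        ⨅ x : closure (lam • Ω₀), ∫ y in (lam • Ω₀), J (↑x - y))
      Filter.atTop := by
  classical
  have hJi : Integrable J := by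
    by_contra h
    rw [integral_undef h] at hJnorm
    norm_num at hJnorm
  obtain ⟨r₀, hr₀, hsph⟩ := hsphere
  have hclne : ∀ lam : ℝ, (closure (lam • Ω₀)).Nonempty :=
    fun lam => (hΩne.smul_set).closure
  have hbdd : ∀ lam : ℝ, BddBelow (Set.range fun x : closure (lam • Ω₀) =>
      ∫ y in (lam • Ω₀), J ((x : EuclideanSpace ℝ (Fin n)) - y)) := by
    intro lam
    refine ⟨0, ?_⟩
    rintro t ⟨x, rfl⟩
    exact integral_nonneg fun y => hJnn _
  have hcomp : ∀ x : EuclideanSpace ℝ (Fin n), Integrable (fun y => J (x - y)) := by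
    intro x
    exact ((Measure.measurePreserving_sub_left volume x).integrable_comp_emb
      (MeasurableEquiv.subLeft x).measurableEmbedding).mpr hJi
  have hub : ∀ lam : ℝ, (⨅ x : closure (lam • Ω₀),
      ∫ y in (lam • Ω₀), J ((x : EuclideanSpace ℝ (Fin n)) - y)) ≤ 1 := by
    intro lam
    obtain ⟨x, hx⟩ := hclne lam
    refine le_trans (ciInf_le (hbdd lam) ⟨x, hx⟩) ?_
    calc ∫ y in (lam • Ω₀), J (x - y)
        ≤ ∫ y, J (x - y) :=
          setIntegral_le_integral (hcomp x) (Eventually.of_forall fun y => hJnn _)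
      _ = 1 := by rw [integral_sub_left_eq_self J volume x]; exact hJnorm
  have hcob : IsCoboundedUnder (· ≥ ·) Filter.atTop (fun lam : ℝ =>
      ⨅ x : closure (lam • Ω₀), ∫ y in (lam • Ω₀), J ((x : EuclideanSpace ℝ (Fin n)) - y)) :=
    isCoboundedUnder_ge_of_le Filter.atTop hub
  have key : ∀ δ : ℝ, 0 < δ → (1/2 - δ : ℝ) ≤ Filter.liminf
      (fun lam : ℝ =>
        ⨅ x : closure (lam • Ω₀), ∫ y in (lam • Ω₀), J ((x:EuclideanSpace ℝ (Fin n)) - y))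
      Filter.atTop := by
    intro δ hδ
    obtain ⟨R₀, hR₀, hball⟩ := ball_integral_lower J hJi hJc hJnn hJsym hJnorm
      (fun v hv => halfspace_integral J hJi hJsym hJnorm hv) hδ
    apply le_liminf_of_le hcob
    filter_upwards [eventually_ge_atTop (max (R₀ / r₀) 1)] with lam hlam
    have hlam1 : 1 ≤ lam := le_trans (le_max_right _ _) hlam
    have hlam0 : 0 < lam := lt_of_lt_of_le one_pos hlam1
    have hlamR : R₀ ≤ lam * r₀ := by
      have h2 := le_trans (le_max_left _ _) hlam
      rw [div_le_iff₀ hr₀] at h2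
      linarith
    haveI : Nonempty (closure (lam • Ω₀)) := (hclne lam).to_subtype
    apply le_ciInf
    rintro ⟨x, hx⟩
    show (1/2 - δ : ℝ) ≤ ∫ y in (lam • Ω₀), J (x - y)
    have hx' : x ∈ lam • closure Ω₀ := by
      rw [← closure_smul₀' hlam0.ne']; exact hx
    obtain ⟨x₀, hx₀, rfl⟩ := hx'
    obtain ⟨c, hcball, hcx⟩ := hsph x₀ hx₀
    set x : EuclideanSpace ℝ (Fin n) := lam • x₀ with hx_def
    have hsb : lam • Metric.ball c r₀ = Metric.ball (lam • c) (lam * r₀) := by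
      rw [smul_ball hlam0.ne' c r₀, Real.norm_eq_abs, abs_of_pos hlam0]
    have hball_sub : Metric.ball (lam • c) (lam * r₀) ⊆ lam • Ω₀ := by
      rw [← hsb]; exact Set.smul_set_mono hcball
    have hdist : ‖x - lam • c‖ ≤ lam * r₀ := by
      rw [hx_def, ← smul_sub, norm_smul, Real.norm_eq_abs, abs_of_pos hlam0]
      have h3 := Metric.mem_closedBall.mp hcx
      rw [dist_eq_norm] at h3
      exact mul_le_mul_of_nonneg_left h3 hlam0.le
    have hmono : ∫ y in Metric.ball (lam • c) (lam * r₀), J (x - y)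
        ≤ ∫ y in (lam • Ω₀), J (x - y) :=
      setIntegral_mono_set (hcomp x).integrableOn
        (Eventually.of_forall fun y => hJnn _)
        (HasSubset.Subset.eventuallyLE hball_sub)
    have hchg := (Measure.measurePreserving_sub_left volume x).setIntegral_preimage_emb
      (MeasurableEquiv.subLeft x).measurableEmbedding J
      (Metric.ball (x - lam • c) (lam * r₀))
    have hpre : (fun y : EuclideanSpace ℝ (Fin n) => x - y) ⁻¹'
        Metric.ball (x - lam • c) (lam * r₀) = Metric.ball (lam • c) (lam * r₀) := by
      ext y
      simp only [Set.mem_preimage, Metric.mem_ball, dist_eq_norm]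
      have h4 : (x - y) - (x - lam • c) = (lam • c) - y := by abel
      rw [h4, norm_sub_rev]
    rw [hpre] at hchg
    have h6 := hball (lam * r₀) hlamR (x - lam • c) hdist
    rw [← hchg] at h6
    exact le_trans h6 hmono
  set L := Filter.liminf
      (fun lam : ℝ =>
        ⨅ x : closure (lam • Ω₀), ∫ y in (lam • Ω₀), J ((x:EuclideanSpace ℝ (Fin n)) - y))
      Filter.atTop with hL_def
  by_contra hcon
  push_neg at hcon
  have h7 := key ((1/2 - L)/2) (by linarith)
  linarith
end

section
/- Let Ω₀ ⊂ ℝⁿ be open bounded with barycenter x̄, and let Ω_λ = λΩ₀. Define v_λ(x) = c_λ (x_k − λ x̄_k) where I_k = ∫_{Ω₀} (y_k − x̄_k)² dy > 0 and c_λ² = (λ^{n+2} I_k)^{−1}. Then ∫_{Ω_λ} v_λ = 0, ‖v_λ‖_{L²(Ω_λ)} = 1, and if J is continuous, nonnegative, symmetric with finite second moment m₂(J) = ∫_{ℝⁿ} |z|² J(z) dz, then ⟨L v_λ, v_λ⟩ ≥ −(|Ω₀| m₂(J))/(2 I_k λ²). -/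
/-!
Under `y = x / λ` the first two identities become the definitions of `x̄` and `I_k`. For the
energy, exchanging `x` and `y` and using `J (-z) = J z` gives
`⟨L v, v⟩ = -½ ∫∫ J(x - y) (v y - v x)²`. Since `v` is `|c_λ|`-Lipschitz, each inner integral is
at most `c_λ² m₂(J)` by translation invariance, and `|Ω_λ| = λⁿ |Ω₀|` gives the bound.
-/

open MeasureTheory Pointwise Bornology
open scoped NNReal

theorem Continuous.integrableOn_of_isBounded {Y E : Type*} [MetricSpace Y] [ProperSpace Y]
    [MeasurableSpace Y] [OpensMeasurableSpace Y] [NormedAddCommGroup E] {μ : Measure Y}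
    [IsFiniteMeasureOnCompacts μ] {f : Y → E} (hf : Continuous f) {s : Set Y}
    (hs : IsBounded s) : IntegrableOn f s μ :=
  (hf.continuousOn.integrableOn_compact hs.isCompact_closure).mono_set subset_closure

theorem ContinuousLinearMap.map_average {α E F : Type*} [MeasurableSpace α] {μ : Measure α}
    [NormedAddCommGroup E] [NormedSpace ℝ E] [CompleteSpace E]
    [NormedAddCommGroup F] [NormedSpace ℝ F] [CompleteSpace F]
    (L : E →L[ℝ] F) {f : α → E} (hf : Integrable f μ) :
    L (⨍ x, f x ∂μ) = ⨍ x, L (f x) ∂μ := by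
  rw [average_eq, average_eq, map_smul, L.integral_comp_comm hf]

theorem integral_integral_kernel_mul_sub_mul_self_eq {α : Type*} [MeasurableSpace α]
    {μ : Measure α} [SFinite μ] (K : α → α → ℝ) (v : α → ℝ) (hK : ∀ x y, K x y = K y x)
    (hint : Integrable (fun p : α × α => K p.1 p.2 * (v p.2 - v p.1) * v p.1) (μ.prod μ)) :
    ∫ x, (∫ y, K x y * (v y - v x) ∂μ) * v x ∂μ
      = -(1 / 2) * ∫ x, ∫ y, K x y * (v y - v x) ^ 2 ∂μ ∂μ := by
  set f : α × α → ℝ := fun p => K p.1 p.2 * (v p.2 - v p.1) * v p.1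
  have hsymm : (fun p : α × α => K p.1 p.2 * (v p.2 - v p.1) ^ 2)
      = fun p => -(f p + f p.swap) := by
    funext p
    simp only [f, Prod.fst_swap, Prod.snd_swap, hK p.2 p.1]
    ring
  have hint_swap : Integrable (fun p : α × α => f p.swap) (μ.prod μ) := hint.swap
  have hsq : Integrable (fun p : α × α => K p.1 p.2 * (v p.2 - v p.1) ^ 2) (μ.prod μ) := by
    rw [hsymm]; exact (hint.add hint_swap).neg
  calc ∫ x, (∫ y, K x y * (v y - v x) ∂μ) * v x ∂μ
      = ∫ p, f p ∂(μ.prod μ) := by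
        rw [integral_prod f hint]; simp_rw [← integral_mul_const]; rfl
    _ = -(1 / 2) * ∫ p, K p.1 p.2 * (v p.2 - v p.1) ^ 2 ∂(μ.prod μ) := by
        rw [hsymm, integral_neg, integral_add hint hint_swap, integral_prod_swap f]; ring
    _ = _ := by rw [integral_prod _ hsq]

section SecondMoment

variable {E : Type*} [NormedAddCommGroup E] [MeasurableSpace E] [MeasurableAdd E]
  [MeasurableNeg E] (μ : Measure E) [μ.IsAddLeftInvariant] [μ.IsNegInvariant]
  {J : E → ℝ} {v : E → ℝ} {K : ℝ≥0}

theorem setIntegral_kernel_mul_sub_sq_le (hJ : ∀ z, 0 ≤ J z) (hv : LipschitzWith K v)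
    (hm : Integrable (fun z => ‖z‖ ^ 2 * J z) μ) (s : Set E) (x : E) :
    ∫ y in s, J (x - y) * (v y - v x) ^ 2 ∂μ ≤ K ^ 2 * ∫ z, ‖z‖ ^ 2 * J z ∂μ := by
  have hmx : Integrable (fun y => (K : ℝ) ^ 2 * (‖x - y‖ ^ 2 * J (x - y))) μ :=
    (hm.comp_sub_left x).const_mul _
  have hpt : ∀ y, J (x - y) * (v y - v x) ^ 2 ≤ K ^ 2 * (‖x - y‖ ^ 2 * J (x - y)) := by
    intro y
    have hlip : |v y - v x| ≤ K * ‖x - y‖ := by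
      simpa [Real.dist_eq, dist_eq_norm, norm_sub_rev y x] using hv.dist_le_mul y x
    have hsq : (v y - v x) ^ 2 ≤ (K * ‖x - y‖) ^ 2 := by
      rw [← sq_abs]; exact pow_le_pow_left₀ (abs_nonneg _) hlip 2
    nlinarith [hJ (x - y), hsq]
  calc ∫ y in s, J (x - y) * (v y - v x) ^ 2 ∂μ
      ≤ ∫ y in s, (K : ℝ) ^ 2 * (‖x - y‖ ^ 2 * J (x - y)) ∂μ :=
        integral_mono_of_nonneg (ae_of_all _ fun y => mul_nonneg (hJ _) (sq_nonneg _))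
          hmx.integrableOn (ae_of_all _ hpt)
    _ ≤ ∫ y, (K : ℝ) ^ 2 * (‖x - y‖ ^ 2 * J (x - y)) ∂μ :=
        setIntegral_le_integral hmx
          (ae_of_all _ fun y => mul_nonneg (by positivity) (mul_nonneg (by positivity) (hJ _)))
    _ = K ^ 2 * ∫ z, ‖z‖ ^ 2 * J z ∂μ := by
        rw [integral_const_mul, integral_sub_left_eq_self (fun z => ‖z‖ ^ 2 * J z) μ x]

theorem setIntegral_setIntegral_kernel_mul_sub_sq_le (hJ : ∀ z, 0 ≤ J z)
    (hv : LipschitzWith K v) (hm : Integrable (fun z => ‖z‖ ^ 2 * J z) μ) {s : Set E}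
    (hs : μ s ≠ ⊤) :
    ∫ x in s, ∫ y in s, J (x - y) * (v y - v x) ^ 2 ∂μ ∂μ
      ≤ μ.real s * (K ^ 2 * ∫ z, ‖z‖ ^ 2 * J z ∂μ) := by
  calc ∫ x in s, ∫ y in s, J (x - y) * (v y - v x) ^ 2 ∂μ ∂μ
      ≤ ∫ _ in s, (K : ℝ) ^ 2 * ∫ z, ‖z‖ ^ 2 * J z ∂μ ∂μ :=
        integral_mono_of_nonneg
          (ae_of_all _ fun x => integral_nonneg fun y => mul_nonneg (hJ _) (sq_nonneg _))
          (by exact integrableOn_const hs)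
          (ae_of_all _ (setIntegral_kernel_mul_sub_sq_le μ hJ hv hm s))
    _ = _ := by rw [setIntegral_const, smul_eq_mul]

end SecondMoment

theorem EuclideanSpace.lipschitzWith_const_mul_apply_sub {ι : Type*} [Fintype ι]
    (c a : ℝ) (k : ι) :
    LipschitzWith ‖c‖₊ (fun x : EuclideanSpace ℝ ι => c * (x k - a)) :=
  LipschitzWith.of_dist_le_mul fun x y => by
    calc dist (c * (x k - a)) (c * (y k - a)) = ‖c‖ * dist (x k) (y k) := by
          simp only [Real.dist_eq, ← mul_sub, abs_mul, Real.norm_eq_abs]; ring_nf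
      _ ≤ ‖c‖ * dist x y := by gcongr; exact PiLp.dist_apply_le x y k

theorem stmt_12_general (n : ℕ) (Ω₀ : Set (EuclideanSpace ℝ (Fin n)))
    (hΩb : Bornology.IsBounded Ω₀)
    (xbar : EuclideanSpace ℝ (Fin n))
    (hxbar : xbar = ((volume Ω₀).toReal)⁻¹ • ∫ y in Ω₀, y)
    (k : Fin n) (Ik : ℝ) (hIk : Ik = ∫ y in Ω₀, (y k - xbar k) ^ 2)
    (hIkpos : 0 < Ik)
    (lam : ℝ) (hlam : 0 < lam)
    (clam : ℝ) (hclam : clam ^ 2 = (lam ^ (n + 2) * Ik)⁻¹)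
    (v : EuclideanSpace ℝ (Fin n) → ℝ)
    (hv : v = fun x => clam * (x k - lam * xbar k))
    (J : EuclideanSpace ℝ (Fin n) → ℝ)
    (hJc : Continuous J) (hJnn : ∀ z, 0 ≤ J z) (hJsym : ∀ z, J (-z) = J z)
    (m₂ : ℝ) (hm₂ : m₂ = ∫ z, ‖z‖ ^ 2 * J z)
    (hm₂int : Integrable (fun z => ‖z‖ ^ 2 * J z)) :
    (∫ x in (lam • Ω₀), v x = 0) ∧
    (∫ x in (lam • Ω₀), (v x) ^ 2 = 1) ∧
    (∫ x in (lam • Ω₀), (∫ y in (lam • Ω₀), J (x - y) * (v y - v x)) * v x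
      ≥ -((volume Ω₀).toReal * m₂) / (2 * Ik * lam ^ 2)) := by
  have := isFiniteMeasure_restrict.2 (hΩb.measure_lt_top (μ := volume)).ne
  have hrescale : ∀ f : EuclideanSpace ℝ (Fin n) → ℝ,
      ∫ x in lam • Ω₀, f x = lam ^ n * ∫ y in Ω₀, f (lam • y) := fun f => by
    rw [Measure.setIntegral_comp_smul_of_pos _ f Ω₀ hlam, finrank_euclideanSpace_fin, smul_eq_mul,
      mul_inv_cancel_left₀ (pow_ne_zero _ hlam.ne')]
  have hv_smul : ∀ y, v (lam • y) = clam * lam * (y k - xbar k) := fun y => by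
    simp only [hv, PiLp.smul_apply, smul_eq_mul]; ring
  have hmean : ∫ y in Ω₀, (y k - xbar k) = 0 := by
    have hxbar_k : xbar k = ⨍ y in Ω₀, y k := by
      rw [hxbar, ← measureReal_def, ← setAverage_eq]
      exact (EuclideanSpace.proj k).map_average (continuous_id.integrableOn_of_isBounded hΩb)
    rw [hxbar_k]
    exact integral_sub_average _ _
  refine ⟨?_, ?_, ?_⟩
  · simp_rw [hrescale, hv_smul, integral_const_mul, hmean, mul_zero]
  · simp_rw [hrescale, hv_smul, mul_pow, integral_const_mul, ← hIk, hclam, pow_add]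
    field_simp
  set s := lam • Ω₀
  have hsb : IsBounded s := hΩb.smul₀ lam
  have hvol : volume.real s = lam ^ n * (volume Ω₀).toReal := by
    rw [measureReal_def, Measure.addHaar_smul, finrank_euclideanSpace_fin,
      abs_of_pos (pow_pos hlam n), ENNReal.toReal_mul, ENNReal.toReal_ofReal (pow_pos hlam n).le]
  have hvc : Continuous v := hv ▸ by fun_prop
  have hgreen := integral_integral_kernel_mul_sub_mul_self_eq (μ := volume.restrict s)
    (fun x y => J (x - y)) v (fun x y => by rw [← neg_sub, hJsym])
    (by
      rw [Measure.prod_restrict, ← Measure.volume_eq_prod]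
      exact Continuous.integrableOn_of_isBounded (by fun_prop) (hsb.prod hsb))
  have hbound := setIntegral_setIntegral_kernel_mul_sub_sq_le volume hJnn
    (hv ▸ EuclideanSpace.lipschitzWith_const_mul_apply_sub clam (lam * xbar k) k) hm₂int
    hsb.measure_lt_top.ne
  rw [ge_iff_le, hgreen]
  rw [hvol, ← hm₂, coe_nnnorm, Real.norm_eq_abs, sq_abs, hclam] at hbound
  have hrhs : lam ^ n * (volume Ω₀).toReal * ((lam ^ (n + 2) * Ik)⁻¹ * m₂)
      = (volume Ω₀).toReal * m₂ / (Ik * lam ^ 2) := by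
    rw [pow_add]; field_simp
  rw [hrhs, le_div_iff₀ (by positivity)] at hbound
  rw [div_le_iff₀ (by positivity)]
  linarith

/-- The linear barycentric test function on the scaled domain: zero mean,
unit norm, and the energy lower bound `-(|Ω₀| m₂(J))/(2 I_k λ²)`. -/
theorem stmt_12 (n : ℕ) (Ω₀ : Set (EuclideanSpace ℝ (Fin n)))
    (hΩo : IsOpen Ω₀) (hΩb : Bornology.IsBounded Ω₀) (hΩpos : 0 < volume Ω₀)
    (xbar : EuclideanSpace ℝ (Fin n))
    (hxbar : xbar = ((volume Ω₀).toReal)⁻¹ • ∫ y in Ω₀, y)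
    (k : Fin n) (Ik : ℝ) (hIk : Ik = ∫ y in Ω₀, (y k - xbar k) ^ 2)
    (hIkpos : 0 < Ik)
    (lam : ℝ) (hlam : 0 < lam)
    (clam : ℝ) (hclam : clam ^ 2 = (lam ^ (n + 2) * Ik)⁻¹)
    (v : EuclideanSpace ℝ (Fin n) → ℝ)
    (hv : v = fun x => clam * (x k - lam * xbar k))
    (J : EuclideanSpace ℝ (Fin n) → ℝ)
    (hJc : Continuous J) (hJnn : ∀ z, 0 ≤ J z) (hJsym : ∀ z, J (-z) = J z)
    (hJint : Integrable J)
    (m₂ : ℝ) (hm₂ : m₂ = ∫ z, ‖z‖ ^ 2 * J z)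
    (hm₂int : Integrable (fun z => ‖z‖ ^ 2 * J z)) :
    (∫ x in (lam • Ω₀), v x = 0) ∧
    (∫ x in (lam • Ω₀), (v x) ^ 2 = 1) ∧
    (∫ x in (lam • Ω₀), (∫ y in (lam • Ω₀), J (x - y) * (v y - v x)) * v x
      ≥ -((volume Ω₀).toReal * m₂) / (2 * Ik * lam ^ 2)) :=
  stmt_12_general n Ω₀ hΩb xbar hxbar k Ik hIk hIkpos lam hlam clam hclam v hv J hJc hJnn hJsym m₂
    hm₂ hm₂int
end
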